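/- arXiv:math/0311148 — 6 statements merged into one kernel-verified Lean document; each statement's English description precedes it below -/
import Mathlib

section
/- If I is a (k-2)-subset of {1,...,n} and i,j,s,t are distinct indices disjoint from I, then the Plücker coordinates of any k×n matrix satisfy the short Plücker relation Δ^{I∪{i,j}} · Δ^{I∪{s,t}} = Δ^{I∪{i,s}} · Δ^{I∪{j,t}} + Δ^{I∪{j,s}} · Δ^{I∪{i,t}}, where Δ^K denotes the k×k minor with column set K (columns ordered so that i<j, s<t, i<s<j<t). -/
/-- The Plücker coordinate of a `k × n` matrix on the column set `K`
(the `k × k` minor on the columns of `K` taken in increasing order);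
defined to be `0` if `K` does not have exactly `k` elements. -/
noncomputable def pluecker {k n : ℕ} (M : Matrix (Fin k) (Fin n) ℂ)
    (K : Finset (Fin n)) : ℂ :=
  if h : K.card = k then (M.submatrix id (K.orderEmbOfFin h)).det else 0

namespace ShortPlueckerAux
open Matrix Fin Equiv
variable {n m : ℕ}

/-- The "bracket": determinant of the square matrix whose rows are `x`, `y`,
followed by the fixed family `u`. -/
noncomputable def brkt (u : Fin m → Fin (m + 2) → ℂ) (x y : Fin (m + 2) → ℂ) : ℂ :=
  (Matrix.of (Fin.cons x (Fin.cons y u))).det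

lemma of_update0 (u : Fin m → Fin (m + 2) → ℂ) (x x' y : Fin (m + 2) → ℂ) :
    Matrix.of (Fin.cons x (Fin.cons y u)) =
      (Matrix.of (Fin.cons x' (Fin.cons y u))).updateRow 0 x := by
  ext q p
  refine Fin.cases ?_ (fun q' => ?_) q
  · simp
  · simp [Matrix.updateRow_apply, Fin.succ_ne_zero]

lemma of_update1 (u : Fin m → Fin (m + 2) → ℂ) (x y y' : Fin (m + 2) → ℂ) :
    Matrix.of (Fin.cons x (Fin.cons y u)) =
      (Matrix.of (Fin.cons x (Fin.cons y' u))).updateRow 1 y := by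
  ext q p
  refine Fin.cases ?_ (fun q' => ?_) q
  · simp [Matrix.updateRow_apply]
  · refine Fin.cases ?_ (fun q'' => ?_) q'
    · simp [Matrix.updateRow_apply, Fin.succ_zero_eq_one]
    · have h1 : (q''.succ.succ : Fin (m + 2)) ≠ 1 := by
        intro h
        have h2 := congrArg Fin.val h
        simp [Fin.val_succ, Fin.val_one] at h2
      rw [Matrix.of_apply, Matrix.updateRow_apply, if_neg h1]
      simp

lemma brkt_add_left (u : Fin m → Fin (m + 2) → ℂ) (x x' y : Fin (m + 2) → ℂ) :
    brkt u (x + x') y = brkt u x y + brkt u x' y := by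
  rw [brkt, brkt, brkt, of_update0 u (x + x') 0 y, of_update0 u x 0 y, of_update0 u x' 0 y,
    Matrix.det_updateRow_add]

lemma brkt_smul_left (u : Fin m → Fin (m + 2) → ℂ) (c : ℂ) (x y : Fin (m + 2) → ℂ) :
    brkt u (c • x) y = c * brkt u x y := by
  rw [brkt, brkt, of_update0 u (c • x) 0 y, of_update0 u x 0 y, Matrix.det_updateRow_smul]

lemma brkt_add_right (u : Fin m → Fin (m + 2) → ℂ) (x y y' : Fin (m + 2) → ℂ) :
    brkt u x (y + y') = brkt u x y + brkt u x y' := by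
  rw [brkt, brkt, brkt, of_update1 u x (y + y') 0, of_update1 u x y 0, of_update1 u x y' 0,
    Matrix.det_updateRow_add]

lemma brkt_smul_right (u : Fin m → Fin (m + 2) → ℂ) (c : ℂ) (x y : Fin (m + 2) → ℂ) :
    brkt u x (c • y) = c * brkt u x y := by
  rw [brkt, brkt, of_update1 u x (c • y) 0, of_update1 u x y 0, Matrix.det_updateRow_smul]

lemma brkt_self (u : Fin m → Fin (m + 2) → ℂ) (x : Fin (m + 2) → ℂ) :
    brkt u x x = 0 := by
  refine Matrix.det_zero_of_row_eq (i := 0) (j := 1) ?_ ?_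
  · exact Fin.zero_ne_one
  · funext p
    rw [show (1 : Fin (m + 2)) = Fin.succ 0 from (Fin.succ_zero_eq_one).symm]
    simp

lemma brkt_anti (u : Fin m → Fin (m + 2) → ℂ) (x y : Fin (m + 2) → ℂ) :
    brkt u x y + brkt u y x = 0 := by
  have h := brkt_self u (x + y)
  rw [brkt_add_left, brkt_add_right, brkt_add_right, brkt_self, brkt_self] at h
  linear_combination h

lemma brkt_symm (u : Fin m → Fin (m + 2) → ℂ) (x y : Fin (m + 2) → ℂ) :
    brkt u x y = -brkt u y x := by
  linear_combination brkt_anti u x y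

lemma brkt_left_u (u : Fin m → Fin (m + 2) → ℂ) (l : Fin m) (y : Fin (m + 2) → ℂ) :
    brkt u (u l) y = 0 := by
  refine Matrix.det_zero_of_row_eq (i := 0) (j := l.succ.succ) ?_ ?_
  · exact (Fin.succ_ne_zero _).symm
  · funext p; simp

lemma brkt_right_u (u : Fin m → Fin (m + 2) → ℂ) (l : Fin m) (x : Fin (m + 2) → ℂ) :
    brkt u x (u l) = 0 := by
  refine Matrix.det_zero_of_row_eq (i := 1) (j := l.succ.succ) ?_ ?_
  · rw [← Fin.succ_zero_eq_one]
    exact fun h => Fin.succ_ne_zero l (Fin.succ_injective _ h).symm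
  · funext p
    rw [show (1 : Fin (m + 2)) = Fin.succ 0 from (Fin.succ_zero_eq_one).symm]
    simp


/-- The three-term quadratic expression, as an alternating 4-form. -/
noncomputable def quadf (u : Fin m → Fin (m + 2) → ℂ) :
    (Fin (m + 2) → ℂ) [⋀^(Fin 4)]→ₗ[ℂ] ℂ where
  toFun v := brkt u (v 0) (v 1) * brkt u (v 2) (v 3) -
      brkt u (v 0) (v 2) * brkt u (v 1) (v 3) +
      brkt u (v 0) (v 3) * brkt u (v 1) (v 2)
  map_update_add' := by
    intro _ v p x x'
    fin_cases p <;>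
      simp +decide [Function.update_apply, Fin.ext_iff, brkt_add_left, brkt_add_right] <;> ring
  map_update_smul' := by
    intro _ v p c x
    fin_cases p <;>
      simp +decide [Function.update_apply, Fin.ext_iff, brkt_smul_left, brkt_smul_right,
        smul_eq_mul] <;> ring
  map_eq_zero_of_eq' := by
    intro v p q hv hpq
    show brkt u (v 0) (v 1) * brkt u (v 2) (v 3) - brkt u (v 0) (v 2) * brkt u (v 1) (v 3) +
      brkt u (v 0) (v 3) * brkt u (v 1) (v 2) = 0
    fin_cases p <;> fin_cases q
    · exact absurd rfl hpq
    · rw [show v 0 = v 1 from hv]; simp only [brkt_self]; ring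
    · rw [show v 0 = v 2 from hv]; simp only [brkt_self]
      linear_combination brkt u (v 2) (v 3) * brkt_anti u (v 2) (v 1)
    · rw [show v 0 = v 3 from hv]; simp only [brkt_self]
      linear_combination brkt u (v 2) (v 3) * brkt_anti u (v 3) (v 1) -
        brkt u (v 1) (v 3) * brkt_anti u (v 3) (v 2)
    · rw [show v 1 = v 0 from hv]; simp only [brkt_self]; ring
    · exact absurd rfl hpq
    · rw [show v 1 = v 2 from hv]; simp only [brkt_self]; ring
    · rw [show v 1 = v 3 from hv]; simp only [brkt_self]
      linear_combination brkt u (v 0) (v 3) * brkt_anti u (v 2) (v 3)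
    · rw [show v 2 = v 0 from hv]; simp only [brkt_self]
      linear_combination brkt u (v 0) (v 3) * brkt_anti u (v 0) (v 1)
    · rw [show v 2 = v 1 from hv]; simp only [brkt_self]; ring
    · exact absurd rfl hpq
    · rw [show v 2 = v 3 from hv]; simp only [brkt_self]; ring
    · rw [show v 3 = v 0 from hv]; simp only [brkt_self]
      linear_combination brkt u (v 0) (v 1) * brkt_anti u (v 2) (v 0) -
        brkt u (v 0) (v 2) * brkt_anti u (v 1) (v 0)
    · rw [show v 3 = v 1 from hv]; simp only [brkt_self]
      linear_combination brkt u (v 0) (v 1) * brkt_anti u (v 2) (v 1)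
    · rw [show v 3 = v 2 from hv]; simp only [brkt_self]; ring
    · exact absurd rfl hpq


lemma quadf_apply (u : Fin m → Fin (m + 2) → ℂ) (v : Fin 4 → Fin (m + 2) → ℂ) :
    quadf u v = brkt u (v 0) (v 1) * brkt u (v 2) (v 3) -
      brkt u (v 0) (v 2) * brkt u (v 1) (v 3) +
      brkt u (v 0) (v 3) * brkt u (v 1) (v 2) := rfl

lemma quad_zero (u : Fin m → Fin (m + 2) → ℂ) (hu : LinearIndependent ℂ u)
    (x y z w : Fin (m + 2) → ℂ) :
    brkt u x y * brkt u z w - brkt u x z * brkt u y w + brkt u x w * brkt u y z = 0 := by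
  have hrange : LinearIndepOn ℂ id (Set.range u) :=
    (linearIndepOn_id_range_iff hu.injective).mpr hu
  set S : Set (Fin (m + 2) → ℂ) := hrange.extend (Set.subset_univ _) with hS
  let e : Module.Basis S ℂ (Fin (m + 2) → ℂ) := Module.Basis.extend hrange
  haveI : Fintype S := FiniteDimensional.fintypeBasisIndex e
  have hcard : Fintype.card S = m + 2 := by
    rw [← Module.finrank_eq_card_basis e, Module.finrank_fin_fun]
  have hzero : quadf u = 0 := by
    apply Module.Basis.ext_alternating e
    intro v hv
    -- find an index mapping into the range of u
    have hmem : ∃ p : Fin 4, (v p : Fin (m + 2) → ℂ) ∈ Set.range u := by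
      by_contra hc
      push_neg at hc
      set G : Fin 4 ⊕ Fin m → S := fun q =>
        Sum.elim v (fun r => ⟨u r, hrange.subset_extend _ ⟨r, rfl⟩⟩) q with hG
      have hGinj : Function.Injective G := by
        rintro (q1 | r1) (q2 | r2) hq
        · exact congrArg Sum.inl (hv (by simpa [hG] using hq))
        · have h2 : (v q1 : Fin (m + 2) → ℂ) = u r2 := congrArg Subtype.val hq
          exact absurd ⟨r2, h2.symm⟩ (hc q1)
        · have h2 : (v q2 : Fin (m + 2) → ℂ) = u r1 := (congrArg Subtype.val hq).symm
          exact absurd ⟨r1, h2.symm⟩ (hc q2)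
        · have := congrArg Subtype.val hq
          simp only [hG, Sum.elim_inr] at this
          exact congrArg Sum.inr (hu.injective this)
      have hle := Fintype.card_le_of_injective G hGinj
      rw [Fintype.card_sum, Fintype.card_fin, Fintype.card_fin, hcard] at hle
      omega
    obtain ⟨p, l, hl⟩ := hmem
    show quadf u (fun q => e (v q)) = (0 : (Fin (m + 2) → ℂ) [⋀^(Fin 4)]→ₗ[ℂ] ℂ) (fun q => e (v q))
    have he : ∀ q, e (v q) = (v q : Fin (m + 2) → ℂ) := fun q => Module.Basis.extend_apply_self hrange (v q)
    rw [quadf_apply]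
    simp only [he, AlternatingMap.zero_apply]
    fin_cases p
    · rw [show ((v (0 : Fin 4) : Fin (m + 2) → ℂ)) = u l from hl.symm]
      simp [brkt_left_u, brkt_right_u]
    · rw [show ((v (1 : Fin 4) : Fin (m + 2) → ℂ)) = u l from hl.symm]
      simp [brkt_left_u, brkt_right_u]
    · rw [show ((v (2 : Fin 4) : Fin (m + 2) → ℂ)) = u l from hl.symm]
      simp [brkt_left_u, brkt_right_u]
    · rw [show ((v (3 : Fin 4) : Fin (m + 2) → ℂ)) = u l from hl.symm]
      simp [brkt_left_u, brkt_right_u]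
  have h0 : quadf u ![x, y, z, w] = 0 := by rw [hzero]; simp
  rw [quadf_apply] at h0
  simpa using h0

/-- Skipping the position of an element in the enumeration of a finset
enumerates the finset with that element erased. -/
lemma orderEmbOfFin_erase {N : ℕ} (K : Finset (Fin n)) (hK : K.card = N + 1)
    (p : Fin (N + 1)) (J : Finset (Fin n)) (hJ : J = K.erase (K.orderEmbOfFin hK p))
    (hJc : J.card = N) (y : Fin N) :
    K.orderEmbOfFin hK (p.succAbove y) = J.orderEmbOfFin hJc y := by
  subst hJ
  have h := Finset.orderEmbOfFin_unique hJc
    (f := fun y => K.orderEmbOfFin hK (p.succAbove y)) ?_ ?_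
  · exact congrFun h y
  · intro x
    rw [Finset.mem_erase]
    refine ⟨fun h => Fin.succAbove_ne p x ((K.orderEmbOfFin hK).injective h), ?_⟩
    exact Finset.orderEmbOfFin_mem K hK _
  · exact (K.orderEmbOfFin hK).strictMono.comp (Fin.strictMono_succAbove p)

/-- The position of an element in the enumeration of a finset is the number of
smaller elements of the finset. -/
lemma card_filter_lt_orderEmbOfFin {N : ℕ} (K : Finset (Fin n)) (hK : K.card = N)
    (p : Fin N) :
    (K.filter (· < K.orderEmbOfFin hK p)).card = (p : ℕ) := by
  have himg : K.filter (· < K.orderEmbOfFin hK p)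
      = (Finset.Iio p).image (K.orderEmbOfFin hK) := by
    ext y
    simp only [Finset.mem_filter, Finset.mem_image, Finset.mem_Iio]
    constructor
    · rintro ⟨hyK, hlt⟩
      have : y ∈ Set.range (K.orderEmbOfFin hK) := by
        rw [Finset.range_orderEmbOfFin]; exact_mod_cast hyK
      obtain ⟨q, rfl⟩ := this
      exact ⟨q, (K.orderEmbOfFin hK).strictMono.lt_iff_lt.mp hlt, rfl⟩
    · rintro ⟨q, hq, rfl⟩
      exact ⟨Finset.orderEmbOfFin_mem K hK q, (K.orderEmbOfFin hK).strictMono hq⟩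
  rw [himg, Finset.card_image_of_injective _ (K.orderEmbOfFin hK).injective, Fin.card_Iio]

lemma brkt_eq_sign_det (M : Matrix (Fin (m + 2)) (Fin n) ℂ) (I : Finset (Fin n))
    (hm : I.card = m) (a b : Fin n) (hab : a < b) (ha : a ∉ I) (hb : b ∉ I) :
    brkt (fun r p => M p (I.orderEmbOfFin hm r)) (fun p => M p a) (fun p => M p b)
      = (-1 : ℂ) ^ ((I.filter (· < a)).card + (I.filter (· < b)).card) *
        pluecker M (I ∪ {a, b}) := by
  classical
  have hdisj : Disjoint I ({a, b} : Finset (Fin n)) := by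
    rw [Finset.disjoint_right]
    intro x hx
    rcases Finset.mem_insert.mp hx with rfl | hx
    · exact ha
    · rw [Finset.mem_singleton] at hx; subst hx; exact hb
  have hKcard : (I ∪ {a, b}).card = m + 2 := by
    rw [Finset.card_union_of_disjoint hdisj, hm, Finset.card_pair hab.ne]
  set K := I ∪ ({a, b} : Finset (Fin n)) with hKdef
  set eK := K.orderEmbOfFin hKcard with heK
  have haK : a ∈ K := by simp [hKdef]
  have hbK : b ∈ K := by simp [hKdef]
  obtain ⟨pA, hpA⟩ : ∃ p, eK p = a := by
    have : a ∈ Set.range eK := by rw [heK, Finset.range_orderEmbOfFin]; exact_mod_cast haK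
    exact this
  set J := K.erase a with hJdef
  have hJcard : J.card = m + 1 := by
    rw [hJdef, Finset.card_erase_of_mem haK, hKcard]
    omega
  set eJ := J.orderEmbOfFin hJcard with heJ
  have hcompA : ∀ y, eK (pA.succAbove y) = eJ y := by
    intro y
    exact orderEmbOfFin_erase K hKcard pA J (by rw [hJdef, hpA]) hJcard y
  have hbJ : b ∈ J := by
    rw [hJdef, Finset.mem_erase]
    exact ⟨hab.ne', hbK⟩
  obtain ⟨pB, hpB⟩ : ∃ p, eJ p = b := by
    have : b ∈ Set.range eJ := by rw [heJ, Finset.range_orderEmbOfFin]; exact_mod_cast hbJ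
    exact this
  have hJerase : I = J.erase b := by
    rw [hJdef, hKdef]
    ext y
    simp only [Finset.mem_erase, Finset.mem_union, Finset.mem_insert, Finset.mem_singleton]
    constructor
    · intro hy
      exact ⟨fun h => hb (h ▸ hy), fun h => ha (h ▸ hy), Or.inl hy⟩
    · rintro ⟨hyb, hya, hy | rfl | rfl⟩
      · exact hy
      · exact absurd rfl hya
      · exact absurd rfl hyb
  have hcompB : ∀ y, eJ (pB.succAbove y) = I.orderEmbOfFin hm y := by
    intro y
    exact (orderEmbOfFin_erase J hJcard pB I (by rw [hJerase, hpB]) hm y)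
  -- the permutation
  set σ2 : Equiv.Perm (Fin (m + 1)) := pB.cycleRange.symm with hσ2
  set σ : Equiv.Perm (Fin (m + 2)) :=
    (Equiv.Perm.decomposeFin.symm (0, σ2)).trans pA.cycleRange.symm with hσ
  have hσ0 : σ 0 = pA := by
    simp [hσ, Equiv.Perm.decomposeFin_symm_apply_zero]
  have hσsucc : ∀ y : Fin (m + 1), σ y.succ = pA.succAbove (σ2 y) := by
    intro y
    simp [hσ, Equiv.Perm.decomposeFin_symm_apply_succ]
  have hσall : ∀ q, eK (σ q) =
      (Fin.cons a (Fin.cons b (fun r => I.orderEmbOfFin hm r) : Fin (m + 1) → Fin n) :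
        Fin (m + 2) → Fin n) q := by
    intro q
    refine Fin.cases ?_ (fun y => ?_) q
    · rw [hσ0, hpA]; simp
    · rw [hσsucc, hcompA]
      refine Fin.cases ?_ (fun z => ?_) y
      · simp [hσ2, hpB]
      · simp [hσ2, hcompB]
  -- identify the bracket matrix with a column permutation of the pluecker matrix
  have hmat : Matrix.of (Fin.cons (fun p => M p a) (Fin.cons (fun p => M p b)
      (fun r p => M p (I.orderEmbOfFin hm r))))
      = ((M.submatrix id eK).submatrix id σ)ᵀ := by
    ext q p
    rw [Matrix.transpose_apply, Matrix.submatrix_apply, Matrix.submatrix_apply, id_eq,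
      hσall q]
    refine Fin.cases ?_ (fun y => ?_) q
    · simp
    · refine Fin.cases ?_ (fun z => ?_) y <;> simp
  have hdet : brkt (fun r p => M p (I.orderEmbOfFin hm r)) (fun p => M p a) (fun p => M p b)
      = Equiv.Perm.sign σ * (M.submatrix id eK).det := by
    rw [brkt, hmat, Matrix.det_transpose, Matrix.det_permute']
  -- compute the sign
  have hpAval : (pA : ℕ) = (I.filter (· < a)).card := by
    have h1 := card_filter_lt_orderEmbOfFin K hKcard pA
    rw [← heK, hpA] at h1
    rw [← h1]
    congr 1
    rw [hKdef]
    ext y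
    simp only [Finset.mem_filter, Finset.mem_union, Finset.mem_insert, Finset.mem_singleton]
    constructor
    · rintro ⟨hy | rfl | rfl, hlt⟩
      · exact ⟨hy, hlt⟩
      · exact absurd hlt (lt_irrefl _)
      · exact absurd (hab.trans hlt) (lt_irrefl _)
    · rintro ⟨hy, hlt⟩
      exact ⟨Or.inl hy, hlt⟩
  have hpBval : (pB : ℕ) = (I.filter (· < b)).card := by
    have h1 := card_filter_lt_orderEmbOfFin J hJcard pB
    rw [← heJ, hpB] at h1
    rw [← h1]
    congr 1
    have hJunion : J = I ∪ {b} := by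
      rw [hJdef, hKdef]
      ext y
      simp only [Finset.mem_erase, Finset.mem_union, Finset.mem_insert, Finset.mem_singleton]
      constructor
      · rintro ⟨hya, hy | rfl | rfl⟩
        · exact Or.inl hy
        · exact absurd rfl hya
        · exact Or.inr rfl
      · rintro (hy | rfl)
        · exact ⟨fun h => ha (h ▸ hy), Or.inl hy⟩
        · exact ⟨hab.ne', Or.inr (Or.inr rfl)⟩
    rw [hJunion]
    ext y
    simp only [Finset.mem_filter, Finset.mem_union, Finset.mem_singleton]
    constructor
    · rintro ⟨hy | rfl, hlt⟩
      · exact ⟨hy, hlt⟩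
      · exact absurd hlt (lt_irrefl _)
    · rintro ⟨hy, hlt⟩
      exact ⟨Or.inl hy, hlt⟩
  have hsign : (Equiv.Perm.sign σ : ℤ) = (-1) ^ ((I.filter (· < a)).card + (I.filter (· < b)).card) := by
    rw [hσ]
    have : Equiv.Perm.sign ((Equiv.Perm.decomposeFin.symm (0, σ2)).trans pA.cycleRange.symm)
        = Equiv.Perm.sign (Equiv.Perm.decomposeFin.symm (0, σ2)) *
          Equiv.Perm.sign pA.cycleRange.symm := by
      rw [mul_comm]
      exact Equiv.Perm.sign_mul _ _
    rw [this, Equiv.Perm.decomposeFin.symm_sign, if_pos rfl, one_mul,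
      Equiv.Perm.sign_symm, Equiv.Perm.sign_symm, Fin.sign_cycleRange, Fin.sign_cycleRange]
    push_cast
    rw [hpAval, hpBval, ← pow_add, add_comm]
  rw [hdet, pluecker, dif_pos hKcard]
  have hsignC := congrArg (fun z : ℤ => (z : ℂ)) hsign
  push_cast at hsignC
  rw [hsignC]

lemma neg_one_sq_pow (e : ℕ) : ((-1 : ℂ) ^ e) * ((-1 : ℂ) ^ e) = 1 := by
  rw [← pow_add]
  exact Even.neg_one_pow ⟨e, rfl⟩

lemma pluecker_eq_sign_brkt (M : Matrix (Fin (m + 2)) (Fin n) ℂ) (I : Finset (Fin n))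
    (hm : I.card = m) (a b : Fin n) (hab : a < b) (ha : a ∉ I) (hb : b ∉ I) :
    pluecker M (I ∪ {a, b})
      = (-1 : ℂ) ^ ((I.filter (· < a)).card + (I.filter (· < b)).card) *
        brkt (fun r p => M p (I.orderEmbOfFin hm r)) (fun p => M p a) (fun p => M p b) := by
  rw [brkt_eq_sign_det M I hm a b hab ha hb, ← mul_assoc, neg_one_sq_pow, one_mul]

lemma brkt_zero_of_dep (u : Fin m → Fin (m + 2) → ℂ)
    (hdep : ¬ LinearIndependent ℂ u) (x y : Fin (m + 2) → ℂ) :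
    brkt u x y = 0 := by
  have h : ¬ LinearIndependent ℂ (Fin.cons x (Fin.cons y u) : Fin (m + 2) → Fin (m + 2) → ℂ) := by
    intro hLI
    apply hdep
    have h2 := hLI.comp (fun r : Fin m => r.succ.succ)
      (fun r1 r2 h => by
        have := Fin.succ_injective _ (Fin.succ_injective _ h); exact this)
    have h3 : (Fin.cons x (Fin.cons y u) : Fin (m + 2) → Fin (m + 2) → ℂ) ∘
        (fun r : Fin m => r.succ.succ) = u := by
      funext r; simp
    rwa [h3] at h2
  exact (Matrix.detRowAlternating : (Fin (m + 2) → ℂ) [⋀^(Fin (m + 2))]→ₗ[ℂ] ℂ).map_linearDependent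
    (Fin.cons x (Fin.cons y u)) h

lemma pluecker_zero_of_dep (M : Matrix (Fin (m + 2)) (Fin n) ℂ) (I : Finset (Fin n))
    (hm : I.card = m)
    (hdep : ¬ LinearIndependent ℂ (fun r p => M p (I.orderEmbOfFin hm r)))
    (a b : Fin n) (hab : a < b) (ha : a ∉ I) (hb : b ∉ I) :
    pluecker M (I ∪ {a, b}) = 0 := by
  rw [pluecker_eq_sign_brkt M I hm a b hab ha hb, brkt_zero_of_dep _ hdep, mul_zero]

end ShortPlueckerAux

open ShortPlueckerAux in
/-- The short Plücker relation:  if `I` is a `(k-2)`-subset of the column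
indices and `i < s < j < t` are distinct indices disjoint from `I`, then
`Δ^{I∪{i,j}} Δ^{I∪{s,t}} = Δ^{I∪{i,s}} Δ^{I∪{j,t}} + Δ^{I∪{j,s}} Δ^{I∪{i,t}}`. -/
theorem short_pluecker_relation {k n : ℕ} (M : Matrix (Fin k) (Fin n) ℂ)
    (I : Finset (Fin n)) (hI : I.card + 2 = k)
    (i j s t : Fin n)
    (hij : i < s) (hsj : s < j) (hjt : j < t)
    (hi : i ∉ I) (hj : j ∉ I) (hs : s ∉ I) (ht : t ∉ I) :
    pluecker M (I ∪ {i, j}) * pluecker M (I ∪ {s, t}) =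
      pluecker M (I ∪ {i, s}) * pluecker M (I ∪ {j, t}) +
        pluecker M (I ∪ {j, s}) * pluecker M (I ∪ {i, t}) := by
  subst hI
  have hIJ : i < j := hij.trans hsj
  have hst : s < t := hsj.trans hjt
  have hit : i < t := hIJ.trans hjt
  rw [Finset.pair_comm j s]
  by_cases hLI : LinearIndependent ℂ (fun r p => M p (I.orderEmbOfFin rfl r))
  · have hq := quad_zero _ hLI (fun p => M p i) (fun p => M p j) (fun p => M p s)
      (fun p => M p t)
    have hanti := brkt_anti (fun r p => M p (I.orderEmbOfFin rfl r))
      (fun p => M p s) (fun p => M p j)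
    rw [pluecker_eq_sign_brkt M I rfl i j hIJ hi hj,
        pluecker_eq_sign_brkt M I rfl s t hst hs ht,
        pluecker_eq_sign_brkt M I rfl i s hij hi hs,
        pluecker_eq_sign_brkt M I rfl j t hjt hj ht,
        pluecker_eq_sign_brkt M I rfl s j hsj hs hj,
        pluecker_eq_sign_brkt M I rfl i t hit hi ht]
    linear_combination
      ((-1 : ℂ) ^ ((I.filter (· < i)).card + (I.filter (· < j)).card +
        (I.filter (· < s)).card + (I.filter (· < t)).card)) * hq -
      ((-1 : ℂ) ^ ((I.filter (· < i)).card + (I.filter (· < j)).card +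
        (I.filter (· < s)).card + (I.filter (· < t)).card)) *
        (brkt (fun r p => M p (I.orderEmbOfFin rfl r)) (fun p => M p i) (fun p => M p t)) *
        hanti
  · rw [pluecker_zero_of_dep M I rfl hLI i j hIJ hi hj,
        pluecker_zero_of_dep M I rfl hLI s t hst hs ht,
        pluecker_zero_of_dep M I rfl hLI i s hij hi hs,
        pluecker_zero_of_dep M I rfl hLI j t hjt hj ht,
        pluecker_zero_of_dep M I rfl hLI s j hsj hs hj,
        pluecker_zero_of_dep M I rfl hLI i t hit hi ht]
    ring
end

section
/- Any maximal (by inclusion) family of pairwise non-crossing (weakly separated) k-subsets of {1,...,n} has cardinality at most k(n−k)+1. -/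
/-- `x` lies strictly inside the open arc going clockwise from `a` to `b`
on the circle with `n` marked points. -/
def inArc {n : ℕ} (a b x : Fin n) : Prop :=
  0 < (x.val + n - a.val) % n ∧ (x.val + n - a.val) % n < (b.val + n - a.val) % n

/-- The chord joining `a` and `b` crosses the chord joining `c` and `d`
(they intersect in the interior of the polygon). -/
def ChordsCross {n : ℕ} (a b c d : Fin n) : Prop :=
  (inArc a b c ∧ inArc b a d) ∨ (inArc a b d ∧ inArc b a c)

/-- `I` and `J` are non-crossing (weakly separated): no chord with endpoints
in `I − J` crosses a chord with endpoints in `J − I`. -/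
def WeaklySeparated {n : ℕ} (I J : Finset (Fin n)) : Prop :=
  ∀ a ∈ I \ J, ∀ b ∈ I \ J, ∀ c ∈ J \ I, ∀ d ∈ J \ I, ¬ ChordsCross a b c d

namespace WSAux

open Finset

/-- No 4-term alternation `p₁ < q₁ < p₂ < q₂` with `p`'s in `I \ J`, `q`'s in `J \ I`. -/
def NoAlt (I J : Finset ℕ) : Prop :=
  ∀ p₁ ∈ I \ J, ∀ q₁ ∈ J \ I, ∀ p₂ ∈ I \ J, ∀ q₂ ∈ J \ I,
    ¬(p₁ < q₁ ∧ q₁ < p₂ ∧ p₂ < q₂)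

/-- No element of `I \ J` lies strictly between two elements of `J \ I`. -/
def Mid (I J : Finset ℕ) : Prop :=
  ∀ p ∈ I \ J, ∀ q₁ ∈ J \ I, ∀ q₂ ∈ J \ I, ¬(q₁ < p ∧ p < q₂)

def Rel (I J : Finset ℕ) : Prop :=
  (I.card = J.card → NoAlt I J) ∧ (I.card < J.card → Mid I J) ∧
    (J.card < I.card → Mid J I)

lemma sdiff_erase_erase {z : ℕ} {S T : Finset ℕ} (hzT : z ∈ T) :
    (S.erase z) \ (T.erase z) = S \ T := by
  ext x
  simp only [mem_erase, mem_sdiff, not_and, ne_eq]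
  constructor
  · rintro ⟨⟨hxz, hxS⟩, h2⟩
    exact ⟨hxS, fun hxT => (h2 hxz) hxT⟩
  · rintro ⟨hxS, hxT⟩
    exact ⟨⟨fun h => hxT (h ▸ hzT), hxS⟩, fun _ hxT' => hxT hxT'⟩

lemma sdiff_erase_left {z : ℕ} {S T : Finset ℕ} (hzT : z ∉ T) :
    T \ (S.erase z) = T \ S := by
  ext x
  simp only [mem_sdiff, mem_erase, not_and, ne_eq]
  constructor
  · rintro ⟨hxT, h2⟩
    refine ⟨hxT, fun hxS => (h2 ?_) hxS⟩
    rintro rfl; exact hzT hxT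
  · rintro ⟨hxT, hxS⟩
    exact ⟨hxT, fun _ hxS' => hxS hxS'⟩

lemma sdiff_erase_right {z : ℕ} {S T : Finset ℕ} :
    (S.erase z) \ T = (S \ T).erase z := by
  ext x
  simp only [mem_erase, mem_sdiff, ne_eq]
  tauto


/-- Erasing the top element `z` from both sets preserves `Rel`. -/
lemma rel_erase_both {z : ℕ} {S T : Finset ℕ} (hzS : z ∈ S) (hzT : z ∈ T)
    (h : Rel S T) : Rel (S.erase z) (T.erase z) := by
  have hdST : (S.erase z) \ (T.erase z) = S \ T := sdiff_erase_erase hzT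
  have hdTS : (T.erase z) \ (S.erase z) = T \ S := sdiff_erase_erase hzS
  have hcS : (S.erase z).card = S.card - 1 := card_erase_of_mem hzS
  have hcT : (T.erase z).card = T.card - 1 := card_erase_of_mem hzT
  have hS1 : 1 ≤ S.card := card_pos.mpr ⟨z, hzS⟩
  have hT1 : 1 ≤ T.card := card_pos.mpr ⟨z, hzT⟩
  refine ⟨fun hc => ?_, fun hc => ?_, fun hc => ?_⟩
  · have : S.card = T.card := by omega
    unfold NoAlt; rw [hdST, hdTS]; exact h.1 this
  · have : S.card < T.card := by omega
    unfold Mid; rw [hdST, hdTS]; exact h.2.1 this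
  · have : T.card < S.card := by omega
    unfold Mid; rw [hdST, hdTS]; exact h.2.2 this

/-- Erasing the top element `z` from `S` (with `z ∉ T`, all of `T` below `z`)
preserves `Rel` in both directions. -/
lemma rel_erase_right {z : ℕ} {T S : Finset ℕ}
    (hzS : z ∈ S) (hzT : z ∉ T) (hT : ∀ x ∈ T, x < z)
    (hTS : Rel T S) (hST : Rel S T) :
    Rel T (S.erase z) ∧ Rel (S.erase z) T := by
  have hdTS' : T \ (S.erase z) = T \ S := sdiff_erase_left hzT
  have hdS'T : (S.erase z) \ T = (S \ T).erase z := sdiff_erase_right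
  have hcS : (S.erase z).card = S.card - 1 := card_erase_of_mem hzS
  have hS1 : 1 ≤ S.card := card_pos.mpr ⟨z, hzS⟩
  have hzST : z ∈ S \ T := mem_sdiff.mpr ⟨hzS, hzT⟩
  have hsub : ∀ x ∈ (S.erase z) \ T, x ∈ S \ T := by
    intro x hx; rw [hdS'T] at hx; exact mem_of_mem_erase hx
  -- the middle condition from `S` to `T` when `S.card ≤ T.card`
  have hMidS'T : S.card ≤ T.card → Mid (S.erase z) T := by
    intro hle p hp q₁ hq₁ q₂ hq₂ hpq
    rw [hdTS'] at hq₁ hq₂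
    have hpST : p ∈ S \ T := hsub p hp
    rcases Nat.lt_or_ge S.card T.card with hlt | hge
    · -- `S.card < T.card`: use `Mid S T` directly
      exact hST.2.1 hlt p hpST q₁ hq₁ q₂ hq₂ hpq
    · -- `S.card = T.card`: use `NoAlt T S` with the extra point `z`
      have heq : T.card = S.card := by omega
      have hq₂z : q₂ < z := hT q₂ (mem_sdiff.mp hq₂).1
      exact hTS.1 heq q₁ hq₁ p hpST q₂ hq₂ z hzST ⟨hpq.1, hpq.2, hq₂z⟩
  constructor
  · refine ⟨fun hc => ?_, fun hc => ?_, fun hc => ?_⟩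
    · -- T.card = S.card - 1 : need NoAlt T (S.erase z), from Mid T S
      have hlt : T.card < S.card := by omega
      intro p₁ hp₁ q₁ hq₁ p₂ hp₂ q₂ hq₂ hpat
      rw [hdTS'] at hp₁ hp₂
      exact hST.2.2 hlt p₂ hp₂ q₁ (hsub q₁ hq₁) q₂ (hsub q₂ hq₂)
        ⟨hpat.2.1, hpat.2.2⟩
    · -- T.card < S.card - 1 : Mid T (S.erase z) from Mid T S
      have hlt : T.card < S.card := by omega
      intro p hp q₁ hq₁ q₂ hq₂ hpq
      rw [hdTS'] at hp
      exact hST.2.2 hlt p hp q₁ (hsub q₁ hq₁) q₂ (hsub q₂ hq₂) hpq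
    · exact hMidS'T (by omega)
  · refine ⟨fun hc => ?_, fun hc => ?_, fun hc => ?_⟩
    · -- S.card - 1 = T.card : NoAlt (S.erase z) T from Mid T S
      have hlt : T.card < S.card := by omega
      intro p₁ hp₁ q₁ hq₁ p₂ hp₂ q₂ hq₂ hpat
      rw [hdTS'] at hq₁ hq₂
      exact hST.2.2 hlt q₁ hq₁ p₁ (hsub p₁ hp₁) p₂ (hsub p₂ hp₂)
        ⟨hpat.1, hpat.2.1⟩
    · exact hMidS'T (by omega)
    · -- T.card < S.card - 1 : Mid T (S.erase z)
      have hlt : T.card < S.card := by omega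
      intro p hp q₁ hq₁ q₂ hq₂ hpq
      rw [hdTS'] at hp
      exact hST.2.2 hlt p hp q₁ (hsub q₁ hq₁) q₂ (hsub q₂ hq₂) hpq

/-- At most one "vertical pair" (T, T∪{z}) per cardinality. -/
lemma collision_unique {z : ℕ} {C : Finset (Finset ℕ)}
    (hrel : ∀ X ∈ C, ∀ Y ∈ C, Rel X Y)
    {T T' : Finset ℕ} (hT : T ∈ C) (hT' : T' ∈ C)
    (hTz : insert z T ∈ C) (hT'z : insert z T' ∈ C)
    (hzT : z ∉ T) (hzT' : z ∉ T')
    (hbT : ∀ x ∈ T, x < z) (hbT' : ∀ x ∈ T', x < z)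
    (hcard : T.card = T'.card) : T = T' := by
  by_contra hne
  have h1 : (T \ T').Nonempty := by
    rw [sdiff_nonempty]
    intro hsub
    exact hne (Finset.eq_of_subset_of_card_le hsub (le_of_eq hcard.symm))
  have h2 : (T' \ T).Nonempty := by
    rw [sdiff_nonempty]
    intro hsub
    exact hne (Finset.eq_of_subset_of_card_le hsub (le_of_eq hcard)).symm
  obtain ⟨q, hq⟩ := h1
  obtain ⟨p, hp⟩ := h2
  -- generic claim
  have key : ∀ (A B : Finset ℕ), A ∈ C → insert z B ∈ C → z ∉ A → z ∉ B →
      (∀ x ∈ A, x < z) → A.card = B.card →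
      ∀ u ∈ A \ B, ∀ v ∈ B \ A, u < v := by
    intro A B hA hBz hzA hzB hbA hcAB u hu v hv
    have hσ : A.card < (insert z B).card := by
      rw [card_insert_of_notMem hzB]; omega
    have hmid := (hrel A hA (insert z B) hBz).2.1 hσ
    have huz : u < z := hbA u (mem_sdiff.mp hu).1
    have hu' : u ∈ A \ insert z B := by
      rw [mem_sdiff] at hu ⊢
      simp only [mem_insert]
      exact ⟨hu.1, by rintro (rfl | h) <;> [exact hzA hu.1; exact hu.2 h]⟩
    have hv' : v ∈ (insert z B) \ A := by
      rw [mem_sdiff] at hv ⊢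
      exact ⟨mem_insert_of_mem hv.1, hv.2⟩
    have hz' : z ∈ (insert z B) \ A := mem_sdiff.mpr ⟨mem_insert_self _ _, hzA⟩
    have := hmid u hu' v hv' z hz'
    have hne' : u ≠ v := by
      rw [mem_sdiff] at hu hv
      rintro rfl; exact hu.2 hv.1
    omega
  have k1 : q < p := key T T' hT hT'z hzT hzT' hbT hcard q hq p hp
  have k2 : p < q := key T' T hT' hTz hzT' hzT hbT' hcard.symm p hp q hq
  omega


lemma arith (m a b : ℕ) (hab : a ≤ b) (hb1 : 1 ≤ b) (hbm : b ≤ m + 1) :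
    (min b m) * (m - min b m) + 1 + (∑ j ∈ Finset.Ico (a - 1) (min b m), (j + 1))
      + (b - a)
    ≤ b * (m + 1 - b) + 1 + ∑ j ∈ Finset.Ico a b, (j + 1) := by
  rcases le_or_gt b m with hbm' | hbm'
  · rw [min_eq_left hbm']
    have hP : b * (m + 1 - b) = b * (m - b) + b := by
      have h : m + 1 - b = (m - b) + 1 := by omega
      rw [h, Nat.mul_succ]
    rw [hP]
    rcases Nat.eq_zero_or_pos a with rfl | ha
    · simp only [Nat.zero_sub, Nat.sub_zero]
      omega
    · -- a ≥ 1 : Ico (a-1) b sums to a + Ico a b sum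
      have hlt : a - 1 < b := by omega
      have hsum := Finset.sum_eq_sum_Ico_succ_bot hlt (fun j => j + 1)
      have hstep : a - 1 + 1 = a := by omega
      rw [hstep] at hsum
      rw [hsum]
      omega
  · -- b = m + 1
    have hbe : b = m + 1 := by omega
    subst hbe
    rw [min_eq_right (by omega : m ≤ m + 1)]
    simp only [Nat.sub_self, Nat.mul_zero, Nat.zero_add, Nat.add_zero]
    have key : (∑ j ∈ Finset.Ico (a - 1) m, (j + 1)) + (m + 1 - a)
        ≤ ∑ j ∈ Finset.Ico a (m + 1), (j + 1) := by
      rcases Nat.eq_zero_or_pos a with rfl | ha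
      · simp only [Nat.sub_zero]
        rw [Finset.sum_Ico_succ_top (Nat.zero_le m) (fun j => j + 1)]
      · -- shift the sum
        have e1 : ∑ j ∈ Finset.Ico (a - 1) m, (j + 1)
            = ∑ j ∈ Finset.Ico a (m + 1), j := by
          rw [Finset.sum_Ico_eq_sum_range, Finset.sum_Ico_eq_sum_range]
          have h : m - (a - 1) = m + 1 - a := by omega
          rw [h]
          apply Finset.sum_congr rfl
          intro i _
          omega
        rw [e1]
        have e2 : ∑ j ∈ Finset.Ico a (m + 1), (j + 1)
            = (∑ j ∈ Finset.Ico a (m + 1), j) + (m + 1 - a) := by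
          rw [Finset.sum_add_distrib, Finset.sum_const, Nat.card_Ico,
            smul_eq_mul, mul_one]
        omega
    omega


lemma main (m : ℕ) : ∀ (a b : ℕ) (C : Finset (Finset ℕ)),
    (∀ S ∈ C, S ⊆ Finset.range m) →
    (∀ S ∈ C, a ≤ S.card ∧ S.card ≤ b) →
    b ≤ m →
    (∀ X ∈ C, ∀ Y ∈ C, Rel X Y) →
    C.card ≤ b * (m - b) + 1 + ∑ j ∈ Finset.Ico a b, (j + 1) := by
  induction m with
  | zero =>
    intro a b C hsub hcards hbm hrel
    have hC : C ⊆ {∅} := by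
      intro S hS
      rw [mem_singleton]
      have := hsub S hS
      rwa [Finset.range_zero, Finset.subset_empty] at this
    calc C.card ≤ ({∅} : Finset (Finset ℕ)).card := card_le_card hC
    _ = 1 := card_singleton _
    _ ≤ _ := by omega
  | succ m ih =>
    intro a b C hsub hcards hbm hrel
    by_cases hCe : C = ∅
    · simp [hCe]
    obtain ⟨S₀, hS₀⟩ := Finset.nonempty_iff_ne_empty.mpr hCe
    have hab : a ≤ b := le_trans (hcards S₀ hS₀).1 (hcards S₀ hS₀).2
    by_cases hb0 : b = 0
    · subst hb0
      have hC : C ⊆ {∅} := by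
        intro S hS
        rw [mem_singleton, ← Finset.card_eq_zero]
        exact Nat.le_zero.mp (hcards S hS).2
      calc C.card ≤ 1 := by simpa using card_le_card hC
      _ ≤ _ := by omega
    have hb1 : 1 ≤ b := Nat.one_le_iff_ne_zero.mpr hb0
    set z := m with hz
    classical
    set C1 : Finset (Finset ℕ) := C.filter (fun S => z ∈ S) with hC1
    set C0 : Finset (Finset ℕ) := C.filter (fun S => z ∉ S) with hC0
    have hsplit : C1.card + C0.card = C.card :=
      Finset.card_filter_add_card_filter_not _
    set C1' : Finset (Finset ℕ) := C1.image (fun S => S.erase z) with hC1'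
    have hinj : Set.InjOn (fun S : Finset ℕ => S.erase z) ↑C1 := by
      intro S hSm T hTm h
      rw [Finset.mem_coe, hC1, mem_filter] at hSm hTm
      rw [← Finset.insert_erase hSm.2, ← Finset.insert_erase hTm.2]
      simp only at h
      rw [h]
    have hcard1' : C1'.card = C1.card := Finset.card_image_of_injOn hinj
    -- membership facts
    have hmemC0 : ∀ T ∈ C0, T ∈ C ∧ z ∉ T := by
      intro T hT; exact mem_filter.mp hT
    have hmemC1' : ∀ T ∈ C1', insert z T ∈ C ∧ z ∉ T := by
      intro T hT
      obtain ⟨S, hS, rfl⟩ := Finset.mem_image.mp hT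
      have hS' := mem_filter.mp hS
      constructor
      · rw [Finset.insert_erase hS'.2]; exact hS'.1
      · exact Finset.notMem_erase _ _
    have hbound : ∀ T ∈ C0 ∪ C1', ∀ x ∈ T, x < z := by
      intro T hT x hx
      rcases Finset.mem_union.mp hT with h | h
      · obtain ⟨hTC, hzT⟩ := hmemC0 T h
        have := Finset.mem_range.mp (hsub T hTC hx)
        have : x ≠ z := fun he => hzT (he ▸ hx)
        omega
      · obtain ⟨S, hS, rfl⟩ := Finset.mem_image.mp h
        have hS' := mem_filter.mp hS
        have hxS : x ∈ S := Finset.mem_of_mem_erase hx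
        have h1 := Finset.mem_range.mp (hsub S hS'.1 hxS)
        have h2 : x ≠ z := Finset.ne_of_mem_erase hx
        omega
    have hsub' : ∀ T ∈ C0 ∪ C1', T ⊆ Finset.range m := by
      intro T hT x hx
      exact Finset.mem_range.mpr (hbound T hT x hx)
    have hcards' : ∀ T ∈ C0 ∪ C1', a - 1 ≤ T.card ∧ T.card ≤ min b m := by
      intro T hT
      have hm : T.card ≤ m := by
        have := Finset.card_le_card (hsub' T hT)
        simpa using this
      rcases Finset.mem_union.mp hT with h | h
      · have := hcards T (hmemC0 T h).1
        exact ⟨by omega, le_min this.2 hm⟩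
      · obtain ⟨S, hS, rfl⟩ := Finset.mem_image.mp h
        have hS' := mem_filter.mp hS
        have hcS := hcards S hS'.1
        have hce : (S.erase z).card = S.card - 1 := card_erase_of_mem hS'.2
        refine ⟨by omega, le_min (by omega) hm⟩
    have hrel' : ∀ X ∈ C0 ∪ C1', ∀ Y ∈ C0 ∪ C1', Rel X Y := by
      intro X hX Y hY
      rcases Finset.mem_union.mp hX with hX' | hX' <;>
        rcases Finset.mem_union.mp hY with hY' | hY'
      · exact hrel X (hmemC0 X hX').1 Y (hmemC0 Y hY').1
      · obtain ⟨S, hS, rfl⟩ := Finset.mem_image.mp hY'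
        have hS' := mem_filter.mp hS
        have hX'' := hmemC0 X hX'
        exact (rel_erase_right hS'.2 hX''.2
          (fun x hx => hbound X (Finset.mem_union_left _ hX') x hx)
          (hrel X hX''.1 S hS'.1) (hrel S hS'.1 X hX''.1)).1
      · obtain ⟨S, hS, rfl⟩ := Finset.mem_image.mp hX'
        have hS' := mem_filter.mp hS
        have hY'' := hmemC0 Y hY'
        exact (rel_erase_right hS'.2 hY''.2
          (fun x hx => hbound Y (Finset.mem_union_left _ hY') x hx)
          (hrel Y hY''.1 S hS'.1) (hrel S hS'.1 Y hY''.1)).2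
      · obtain ⟨S, hS, rfl⟩ := Finset.mem_image.mp hX'
        obtain ⟨S', hS2, rfl⟩ := Finset.mem_image.mp hY'
        have ha := mem_filter.mp hS
        have hb' := mem_filter.mp hS2
        exact rel_erase_both ha.2 hb'.2 (hrel S ha.1 S' hb'.1)
    have hIH := ih (a - 1) (min b m) (C0 ∪ C1') hsub' hcards'
      (min_le_right _ _) hrel'
    -- collision bound
    have hE : (C0 ∩ C1').card ≤ b - a := by
      have hmap : ∀ T ∈ C0 ∩ C1', T.card ∈ Finset.Icc a (b - 1) := by
        intro T hT
        obtain ⟨hT0, hT1⟩ := Finset.mem_inter.mp hT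
        have h1 := (hcards T (hmemC0 T hT0).1).1
        obtain ⟨hins, hzT⟩ := hmemC1' T hT1
        have h2 := (hcards _ hins).2
        rw [card_insert_of_notMem hzT] at h2
        rw [Finset.mem_Icc]
        omega
      have hinj2 : Set.InjOn Finset.card ((C0 ∩ C1' : Finset (Finset ℕ)) : Set (Finset ℕ)) := by
        intro T hTm T' hT'm h
        rw [Finset.mem_coe, Finset.mem_inter] at hTm hT'm
        obtain ⟨hT0, hT1⟩ := hTm
        obtain ⟨hT'0, hT'1⟩ := hT'm
        exact collision_unique hrel (hmemC0 T hT0).1 (hmemC0 T' hT'0).1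
          (hmemC1' T hT1).1 (hmemC1' T' hT'1).1
          (hmemC0 T hT0).2 (hmemC0 T' hT'0).2
          (fun x hx => hbound T (Finset.mem_union_left _ hT0) x hx)
          (fun x hx => hbound T' (Finset.mem_union_left _ hT'0) x hx) h
      calc (C0 ∩ C1').card ≤ (Finset.Icc a (b - 1)).card :=
            Finset.card_le_card_of_injOn Finset.card hmap hinj2
      _ = b - 1 + 1 - a := Nat.card_Icc _ _
      _ ≤ b - a := by omega
    have hkey : C.card = (C0 ∪ C1').card + (C0 ∩ C1').card := by
      rw [Finset.card_union_add_card_inter]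
      omega
    calc C.card = (C0 ∪ C1').card + (C0 ∩ C1').card := hkey
    _ ≤ ((min b m) * (m - min b m) + 1
          + ∑ j ∈ Finset.Ico (a - 1) (min b m), (j + 1)) + (b - a) := by
        exact Nat.add_le_add hIH hE
    _ ≤ b * (m + 1 - b) + 1 + ∑ j ∈ Finset.Ico a b, (j + 1) := by
        have := arith m a b hab hb1 hbm
        omega


lemma cross_of_alt {n : ℕ} {a b c d : Fin n}
    (h1 : a.val < c.val) (h2 : c.val < b.val) (h3 : b.val < d.val) :
    ChordsCross a b c d := by
  have ha := a.isLt
  have hb := b.isLt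
  have hc := c.isLt
  have hd := d.isLt
  have mod1 : (c.val + n - a.val) % n = c.val - a.val := by
    have h : c.val + n - a.val = (c.val - a.val) + n := by omega
    rw [h, Nat.add_mod_right]
    exact Nat.mod_eq_of_lt (by omega)
  have mod2 : (b.val + n - a.val) % n = b.val - a.val := by
    have h : b.val + n - a.val = (b.val - a.val) + n := by omega
    rw [h, Nat.add_mod_right]
    exact Nat.mod_eq_of_lt (by omega)
  have mod3 : (d.val + n - b.val) % n = d.val - b.val := by
    have h : d.val + n - b.val = (d.val - b.val) + n := by omega
    rw [h, Nat.add_mod_right]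
    exact Nat.mod_eq_of_lt (by omega)
  have mod4 : (a.val + n - b.val) % n = a.val + n - b.val :=
    Nat.mod_eq_of_lt (by omega)
  left
  constructor
  · constructor
    · rw [mod1]; omega
    · rw [mod1, mod2]; omega
  · constructor
    · rw [mod3]; omega
    · rw [mod3, mod4]; omega


end WSAux

open WSAux Finset in
/-- Any maximal (by inclusion) family of pairwise weakly separated
`k`-subsets of `{1,…,n}` has cardinality at most `k(n−k)+1`. -/
theorem maximal_weaklySeparated_card_le {n k : ℕ}
    (F : Finset (Finset (Fin n)))
    (hcard : ∀ S ∈ F, S.card = k)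
    (hws : ∀ S ∈ F, ∀ T ∈ F, WeaklySeparated S T)
    (hmax : ∀ S : Finset (Fin n), S.card = k →
      (∀ T ∈ F, WeaklySeparated S T ∧ WeaklySeparated T S) → S ∈ F) :
    F.card ≤ k * (n - k) + 1 := by
  classical
  by_cases hFe : F = ∅
  · simp [hFe]
  obtain ⟨S₀, hS₀⟩ := Finset.nonempty_iff_ne_empty.mpr hFe
  have hkn : k ≤ n := by
    rw [← hcard S₀ hS₀]
    calc S₀.card ≤ Fintype.card (Fin n) := Finset.card_le_univ S₀
    _ = n := Fintype.card_fin n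
  set φ : Finset (Fin n) → Finset ℕ := fun S => S.image Fin.val with hφ
  have hφinj : Function.Injective φ :=
    Finset.image_injective Fin.val_injective
  set C : Finset (Finset ℕ) := F.image φ with hC
  have hCcard : C.card = F.card := Finset.card_image_of_injective F hφinj
  have hsdiff : ∀ S T : Finset (Fin n), φ S \ φ T = (S \ T).image Fin.val := by
    intro S T
    rw [hφ]
    exact (Finset.image_sdiff S T Fin.val_injective).symm
  have hsub : ∀ X ∈ C, X ⊆ Finset.range n := by
    intro X hX
    obtain ⟨S, _, rfl⟩ := Finset.mem_image.mp hX
    intro x hx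
    obtain ⟨i, _, rfl⟩ := Finset.mem_image.mp hx
    exact Finset.mem_range.mpr i.isLt
  have hcards : ∀ X ∈ C, k ≤ X.card ∧ X.card ≤ k := by
    intro X hX
    obtain ⟨S, hS, rfl⟩ := Finset.mem_image.mp hX
    have : (φ S).card = S.card := Finset.card_image_of_injective S Fin.val_injective
    rw [this, hcard S hS]
    exact ⟨le_refl k, le_refl k⟩
  have hrel : ∀ X ∈ C, ∀ Y ∈ C, WSAux.Rel X Y := by
    intro X hX Y hY
    obtain ⟨S, hS, rfl⟩ := Finset.mem_image.mp hX
    obtain ⟨T, hT, rfl⟩ := Finset.mem_image.mp hY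
    have hcS := (hcards _ (Finset.mem_image_of_mem φ hS))
    have hcT := (hcards _ (Finset.mem_image_of_mem φ hT))
    refine ⟨fun _ => ?_, fun hlt => absurd hlt (by omega), fun hlt => absurd hlt (by omega)⟩
    intro p₁ hp₁ q₁ hq₁ p₂ hp₂ q₂ hq₂ hpat
    rw [hsdiff S T] at hp₁ hp₂
    rw [hsdiff T S] at hq₁ hq₂
    obtain ⟨a, haST, rfl⟩ := Finset.mem_image.mp hp₁
    obtain ⟨b, hbST, rfl⟩ := Finset.mem_image.mp hp₂
    obtain ⟨c, hcTS, rfl⟩ := Finset.mem_image.mp hq₁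
    obtain ⟨d, hdTS, rfl⟩ := Finset.mem_image.mp hq₂
    exact hws S hS T hT a haST b hbST c hcTS d hdTS
      (cross_of_alt hpat.1 hpat.2.1 hpat.2.2)
  have := main n k k C hsub hcards hkn hrel
  rw [Finset.Ico_self, Finset.sum_empty, Nat.add_zero] at this
  omega
end

section
/- If C is a family of pairwise weakly separated k-subsets of {1,...,n} containing the five sets I∪{i,j}, I∪{i,s}, I∪{s,j}, I∪{j,t}, I∪{i,t}, where {i,j} and {s,t} are crossing pairs (i<s<j<t) and I is disjoint from {i,j,s,t} with |I|=k−2, then the family C′ obtained from C by replacing I∪{i,j} with I∪{s,t} is also pairwise weakly separated. -/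
lemma cyc_eq {n : ℕ} (p x : Fin n) :
    (x.val + n - p.val) % n = if p.val ≤ x.val then x.val - p.val else x.val + n - p.val := by
  have hx := x.isLt; have hp := p.isLt
  split_ifs with h
  · have h2 : x.val + n - p.val = (x.val - p.val) + n := by omega
    rw [h2, Nat.add_mod_right]; exact Nat.mod_eq_of_lt (by omega)
  · exact Nat.mod_eq_of_lt (by omega)

lemma inArc_iff' {n : ℕ} {a b x : Fin n} :
    inArc a b x ↔ ((a.val < x.val ∧ x.val < b.val) ∨
      (b.val < a.val ∧ (a.val < x.val ∨ x.val < b.val))) := by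
  have hx := x.isLt; have hb := b.isLt; have ha := a.isLt
  unfold inArc
  rw [cyc_eq, cyc_eq]
  split_ifs <;> omega

lemma cross_iff {n : ℕ} {a b c d : Fin n} :
    ChordsCross a b c d ↔ ((inArc a b c ∧ inArc b a d) ∨ (inArc a b d ∧ inArc b a c)) := Iff.rfl

lemma gswap {n : ℕ} {a b c d : Fin n} (h : ChordsCross a b c d) : ChordsCross c d a b := by
  simp only [cross_iff, inArc_iff'] at *; omega

lemma gcomm₁ {n : ℕ} {a b c d : Fin n} (h : ChordsCross a b c d) : ChordsCross b a c d := by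
  simp only [cross_iff, inArc_iff'] at *; omega

lemma gcomm₂ {n : ℕ} {a b c d : Fin n} (h : ChordsCross a b c d) : ChordsCross a b d c := by
  simp only [cross_iff, inArc_iff'] at *; omega

lemma cross_ne₁ {n : ℕ} {a b c d : Fin n} (h : ChordsCross a b c d) : a ≠ b := by
  simp only [cross_iff, inArc_iff', ne_eq, Fin.ext_iff] at *; omega

lemma cross_ne₂ {n : ℕ} {a b c d : Fin n} (h : ChordsCross a b c d) : c ≠ d := by
  simp only [cross_iff, inArc_iff', ne_eq, Fin.ext_iff] at *; omega

lemma tri {n : ℕ} {a b x : Fin n} (hab : a ≠ b) (hxa : x ≠ a) (hxb : x ≠ b) :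
    inArc a b x ∨ inArc b a x := by
  simp only [inArc_iff', ne_eq, Fin.ext_iff] at *; omega

lemma gsplit {n : ℕ} {a b m x : Fin n} (hx : inArc a b x) (hne : x ≠ m) :
    inArc a m x ∨ inArc m b x := by
  simp only [inArc_iff', ne_eq, Fin.ext_iff] at *; omega

lemma notBoth {n : ℕ} {a b x : Fin n} (h1 : inArc a b x) (h2 : inArc b a x) : False := by
  simp only [inArc_iff'] at *; omega

lemma sameSide {n : ℕ} {a b u v : Fin n} (h : ¬ ChordsCross a b u v)
    (hau : a ≠ u) (hav : a ≠ v) (hbu : b ≠ u) (hbv : b ≠ v) (huv : u ≠ v) :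
    inArc u v a ↔ inArc u v b := by
  simp only [cross_iff, inArc_iff', ne_eq, Fin.ext_iff] at *; omega

lemma WS_symm {n : ℕ} {S T : Finset (Fin n)} (h : WeaklySeparated S T) : WeaklySeparated T S :=
  fun a ha b hb c hc d hd hx => h c hc d hd a ha b hb (gswap hx)

lemma memSD {α : Type*} [DecidableEq α] {x : α} {S T : Finset α} (h1 : x ∈ S) (h2 : x ∉ T) :
    x ∈ S \ T := Finset.mem_sdiff.mpr ⟨h1, h2⟩

lemma memU {α : Type*} [DecidableEq α] {x a b : α} {I : Finset α}
    (h : x ∈ I ∨ x = a ∨ x = b) : x ∈ I ∪ {a, b} := by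
  simp only [Finset.mem_union, Finset.mem_insert, Finset.mem_singleton]; exact h

lemma notmemU {α : Type*} [DecidableEq α] {x a b : α} {I : Finset α}
    (h2 : x ∉ I) (h3 : x ≠ a) (h4 : x ≠ b) : x ∉ I ∪ {a, b} := by
  simp only [Finset.mem_union, Finset.mem_insert, Finset.mem_singleton, not_or]
  exact ⟨h2, h3, h4⟩

set_option maxHeartbeats 2000000 in
lemma key {n k : ℕ}
    (C : Finset (Finset (Fin n)))
    (hcard : ∀ S ∈ C, S.card = k)
    (hws : ∀ S ∈ C, ∀ T ∈ C, WeaklySeparated S T)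
    (I : Finset (Fin n)) (hI : I.card + 2 = k)
    (i s j t : Fin n) (h1 : i < s) (h2 : s < j) (h3 : j < t)
    (hi : i ∉ I) (hs : s ∉ I) (hj : j ∉ I) (ht : t ∉ I)
    (m1 : I ∪ {i, j} ∈ C) (m2 : I ∪ {i, s} ∈ C) (m3 : I ∪ {s, j} ∈ C)
    (m4 : I ∪ {j, t} ∈ C) (m5 : I ∪ {i, t} ∈ C)
    (T : Finset (Fin n)) (hT : T ∈ C) (hTne : T ≠ I ∪ {i, j}) :
    WeaklySeparated (I ∪ {s, t}) T := by
  have o1 : i.val < s.val := h1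
  have o2 : s.val < j.val := h2
  have o3 : j.val < t.val := h3
  have o4 : t.val < n := t.isLt
  have nis : i ≠ s := ne_of_lt h1
  have nij : i ≠ j := ne_of_lt (h1.trans h2)
  have nit : i ≠ t := ne_of_lt (h1.trans (h2.trans h3))
  have nsj : s ≠ j := ne_of_lt h2
  have nst : s ≠ t := ne_of_lt (h2.trans h3)
  have njt : j ≠ t := ne_of_lt h3
  have a1 : inArc j s i := by simp only [inArc_iff']; omega
  have a2 : inArc t j i := by simp only [inArc_iff']; omega
  have a3 : inArc i t j := by simp only [inArc_iff']; omega
  have a4 : inArc s i j := by simp only [inArc_iff']; omega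
  have a6 : inArc t s i := by simp only [inArc_iff']; omega
  have ws1 := hws _ m1 _ hT
  have ws2 := hws _ m2 _ hT
  have ws3 := hws _ m3 _ hT
  have ws4 := hws _ m4 _ hT
  have ws5 := hws _ m5 _ hT
  have hTk : T.card = k := hcard T hT
  -- refuter through the sets I∪{i,s} and I∪{s,j}
  have refuteS : ∀ p q u v : Fin n, (p ∈ I ∨ p = s) → p ∉ T → (q ∈ I ∨ q = s) → q ∉ T →
      u ∈ T → u ∉ I → u ≠ s → v ∈ T → v ∉ I → v ≠ s →
      ((u ≠ i ∧ v ≠ i) ∨ (u ≠ j ∧ v ≠ j)) → ChordsCross p q u v → False := by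
    intro p q u v hp hpT hq hqT hu huI hus hv hvI hvs hcond hx
    rcases hcond with ⟨hui, hvi⟩ | ⟨huj, hvj⟩
    · exact ws2 p (memSD (memU (hp.imp id (fun h => Or.inr h))) hpT)
        q (memSD (memU (hq.imp id (fun h => Or.inr h))) hqT)
        u (memSD hu (notmemU huI hui hus)) v (memSD hv (notmemU hvI hvi hvs)) hx
    · exact ws3 p (memSD (memU (hp.imp id (fun h => Or.inl h))) hpT)
        q (memSD (memU (hq.imp id (fun h => Or.inl h))) hqT)
        u (memSD hu (notmemU huI hus huj)) v (memSD hv (notmemU hvI hvs hvj)) hx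
  -- refuter through the sets I∪{i,t} and I∪{j,t}
  have refuteT : ∀ p q u v : Fin n, (p ∈ I ∨ p = t) → p ∉ T → (q ∈ I ∨ q = t) → q ∉ T →
      u ∈ T → u ∉ I → u ≠ t → v ∈ T → v ∉ I → v ≠ t →
      ((u ≠ i ∧ v ≠ i) ∨ (u ≠ j ∧ v ≠ j)) → ChordsCross p q u v → False := by
    intro p q u v hp hpT hq hqT hu huI hut hv hvI hvt hcond hx
    rcases hcond with ⟨hui, hvi⟩ | ⟨huj, hvj⟩
    · exact ws5 p (memSD (memU (hp.imp id (fun h => Or.inr h))) hpT)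
        q (memSD (memU (hq.imp id (fun h => Or.inr h))) hqT)
        u (memSD hu (notmemU huI hui hut)) v (memSD hv (notmemU hvI hvi hvt)) hx
    · exact ws4 p (memSD (memU (hp.imp id (fun h => Or.inr h))) hpT)
        q (memSD (memU (hq.imp id (fun h => Or.inr h))) hqT)
        u (memSD hu (notmemU huI huj hut)) v (memSD hv (notmemU hvI hvj hvt)) hx
  -- the hard case: a chord inside I∪{s,t}\T crossing the chord i--j with i,j ∈ T
  have lhard : ∀ p q : Fin n, (p ∈ I ∨ p = s ∨ p = t) → p ∉ T → (q ∈ I ∨ q = s ∨ q = t) → q ∉ T →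
      ¬((p = s ∨ q = s) ∧ (p = t ∨ q = t)) → i ∈ T → j ∈ T → ChordsCross p q i j → False := by
    intro p q hp hpT hq hqT hst hiT hjT hcr
    have hpq : p ≠ q := cross_ne₁ hcr
    by_cases hsT : s ∈ T
    · have hps : p ≠ s := fun h => hpT (h ▸ hsT)
      have hqs : q ≠ s := fun h => hqT (h ▸ hsT)
      have hp' : p ∈ I ∨ p = t := by rcases hp with h|h|h; exacts [Or.inl h, absurd h hps, Or.inr h]
      have hq' : q ∈ I ∨ q = t := by rcases hq with h|h|h; exacts [Or.inl h, absurd h hqs, Or.inr h]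
      rcases tri hpq (Ne.symm hps) (Ne.symm hqs) with h4 | h4 <;>
        rcases cross_iff.mp hcr with ⟨c1, c2⟩ | ⟨c1, c2⟩
      · exact refuteT p q s j hp' hpT hq' hqT hsT hs nst hjT hj njt
          (Or.inl ⟨nis.symm, nij.symm⟩) (cross_iff.mpr (Or.inl ⟨h4, c2⟩))
      · exact refuteT p q s i hp' hpT hq' hqT hsT hs nst hiT hi nit
          (Or.inr ⟨nsj, nij⟩) (cross_iff.mpr (Or.inl ⟨h4, c2⟩))
      · exact refuteT p q i s hp' hpT hq' hqT hiT hi nit hsT hs nst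
          (Or.inr ⟨nij, nsj⟩) (cross_iff.mpr (Or.inl ⟨c1, h4⟩))
      · exact refuteT p q j s hp' hpT hq' hqT hjT hj njt hsT hs nst
          (Or.inl ⟨nij.symm, nis.symm⟩) (cross_iff.mpr (Or.inl ⟨c1, h4⟩))
    · by_cases htT : t ∈ T
      · have hpt : p ≠ t := fun h => hpT (h ▸ htT)
        have hqt : q ≠ t := fun h => hqT (h ▸ htT)
        have hp' : p ∈ I ∨ p = s := by rcases hp with h|h|h; exacts [Or.inl h, Or.inr h, absurd h hpt]
        have hq' : q ∈ I ∨ q = s := by rcases hq with h|h|h; exacts [Or.inl h, Or.inr h, absurd h hqt]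
        rcases tri hpq (Ne.symm hpt) (Ne.symm hqt) with h4 | h4 <;>
          rcases cross_iff.mp hcr with ⟨c1, c2⟩ | ⟨c1, c2⟩
        · exact refuteS p q t j hp' hpT hq' hqT htT ht nst.symm hjT hj nsj.symm
            (Or.inl ⟨nit.symm, nij.symm⟩) (cross_iff.mpr (Or.inl ⟨h4, c2⟩))
        · exact refuteS p q t i hp' hpT hq' hqT htT ht nst.symm hiT hi nis
            (Or.inr ⟨njt.symm, nij⟩) (cross_iff.mpr (Or.inl ⟨h4, c2⟩))
        · exact refuteS p q i t hp' hpT hq' hqT hiT hi nis htT ht nst.symm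
            (Or.inr ⟨nij, njt.symm⟩) (cross_iff.mpr (Or.inl ⟨c1, h4⟩))
        · exact refuteS p q j t hp' hpT hq' hqT hjT hj nsj.symm htT ht nst.symm
            (Or.inl ⟨nij.symm, nit.symm⟩) (cross_iff.mpr (Or.inl ⟨c1, h4⟩))
      · -- s ∉ T and t ∉ T : use a counting argument to find an extra point of T
        have hAk : (I ∪ {s, t}).card = k := by
          have hd : Disjoint I ({s, t} : Finset (Fin n)) := by
            rw [Finset.disjoint_left]
            intro a ha
            simp only [Finset.mem_insert, Finset.mem_singleton, not_or]
            exact ⟨fun h => hs (h ▸ ha), fun h => ht (h ▸ ha)⟩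
          rw [Finset.card_union_of_disjoint hd, Finset.card_pair nst]
          omega
        have e1 := Finset.card_sdiff_add_card_inter (I ∪ {s, t}) T
        have e2 := Finset.card_sdiff_add_card_inter T (I ∪ {s, t})
        rw [Finset.inter_comm] at e2
        have h3card : 3 ≤ ((I ∪ {s, t}) \ T).card := by
          by_cases hpt : p = t ∨ q = t
          · have hps2 : p ≠ s ∧ q ≠ s :=
              ⟨fun h => hst ⟨Or.inl h, hpt⟩, fun h => hst ⟨Or.inr h, hpt⟩⟩
            calc 3 = ({p, q, s} : Finset (Fin n)).card :=
                  (Finset.card_eq_three.mpr ⟨p, q, s, hpq, hps2.1, hps2.2, rfl⟩).symm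
              _ ≤ _ := Finset.card_le_card (by
                  intro w hw
                  simp only [Finset.mem_insert, Finset.mem_singleton] at hw
                  rcases hw with rfl | rfl | rfl
                  exacts [memSD (memU hp) hpT, memSD (memU hq) hqT,
                    memSD (memU (Or.inr (Or.inl rfl))) hsT])
          · push_neg at hpt
            calc 3 = ({p, q, t} : Finset (Fin n)).card :=
                  (Finset.card_eq_three.mpr ⟨p, q, t, hpq, hpt.1, hpt.2, rfl⟩).symm
              _ ≤ _ := Finset.card_le_card (by
                  intro w hw
                  simp only [Finset.mem_insert, Finset.mem_singleton] at hw
                  rcases hw with rfl | rfl | rfl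
                  exacts [memSD (memU hp) hpT, memSD (memU hq) hqT,
                    memSD (memU (Or.inr (Or.inr rfl))) htT])
        have hne2 : ((T \ (I ∪ {s, t})) \ {i, j}).Nonempty := by
          rw [← Finset.card_pos]
          have h5 := Finset.card_le_card_sdiff_add_card (s := T \ (I ∪ {s, t}))
            (t := ({i, j} : Finset (Fin n)))
          have h6 : ({i, j} : Finset (Fin n)).card ≤ 2 := (Finset.card_insert_le _ _).trans (by simp)
          omega
        obtain ⟨x, hx'⟩ := hne2
        simp only [Finset.mem_sdiff, Finset.mem_union, Finset.mem_insert,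
          Finset.mem_singleton, not_or] at hx'
        obtain ⟨⟨hxT, hxI, hxs, hxt⟩, hxi, hxj⟩ := hx'
        have hxp : x ≠ p := by rintro rfl; rcases hp with h|h|h; exacts [hxI h, hxs h, hxt h]
        have hxq : x ≠ q := by rintro rfl; rcases hq with h|h|h; exacts [hxI h, hxs h, hxt h]
        have route : ∀ u v : Fin n, u ∈ T → u ∉ I → u ≠ s → u ≠ t → v ∈ T → v ∉ I → v ≠ s →
            v ≠ t → ((u ≠ i ∧ v ≠ i) ∨ (u ≠ j ∧ v ≠ j)) → ChordsCross p q u v → False := by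
          intro u v hu huI hus hut hv hvI hvs hvt hcond hx2
          by_cases hpt : p = t ∨ q = t
          · have hps2 : p ≠ s ∧ q ≠ s :=
              ⟨fun h => hst ⟨Or.inl h, hpt⟩, fun h => hst ⟨Or.inr h, hpt⟩⟩
            refine refuteT p q u v ?_ hpT ?_ hqT hu huI hut hv hvI hvt hcond hx2
            · rcases hp with h|h|h; exacts [Or.inl h, absurd h hps2.1, Or.inr h]
            · rcases hq with h|h|h; exacts [Or.inl h, absurd h hps2.2, Or.inr h]
          · push_neg at hpt
            refine refuteS p q u v ?_ hpT ?_ hqT hu huI hus hv hvI hvs hcond hx2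
            · rcases hp with h|h|h; exacts [Or.inl h, Or.inr h, absurd h hpt.1]
            · rcases hq with h|h|h; exacts [Or.inl h, Or.inr h, absurd h hpt.2]
        rcases tri hpq hxp hxq with h4 | h4 <;>
          rcases cross_iff.mp hcr with ⟨c1, c2⟩ | ⟨c1, c2⟩
        · exact route x j hxT hxI hxs hxt hjT hj nsj.symm njt
            (Or.inl ⟨hxi, nij.symm⟩) (cross_iff.mpr (Or.inl ⟨h4, c2⟩))
        · exact route x i hxT hxI hxs hxt hiT hi nis nit
            (Or.inr ⟨hxj, nij⟩) (cross_iff.mpr (Or.inl ⟨h4, c2⟩))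
        · exact route i x hiT hi nis nit hxT hxI hxs hxt
            (Or.inr ⟨nij, hxj⟩) (cross_iff.mpr (Or.inl ⟨c1, h4⟩))
        · exact route j x hjT hj nsj.symm njt hxT hxI hxs hxt
            (Or.inl ⟨nij.symm, hxi⟩) (cross_iff.mpr (Or.inl ⟨c1, h4⟩))
  -- the case where the chord on the I∪{s,t} side is exactly s--t
  have lC : ∀ u v : Fin n, s ∉ T → t ∉ T → u ∈ T → u ∉ I → u ≠ s → u ≠ t →
      v ∈ T → v ∉ I → v ≠ s → v ≠ t → ChordsCross s t u v → False := by
    intro u v hsT htT hu huI hus hut hv hvI hvs hvt hx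
    have huv : u ≠ v := cross_ne₂ hx
    by_cases hIT : I ⊆ T
    · have hsub : I ∪ {u, v} ⊆ T := by
        apply Finset.union_subset hIT
        intro w hw
        simp only [Finset.mem_insert, Finset.mem_singleton] at hw
        rcases hw with rfl | rfl; exacts [hu, hv]
      have hcuv : (I ∪ {u, v}).card = k := by
        rw [Finset.card_union_of_disjoint (by
            rw [Finset.disjoint_left]; intro a ha
            simp only [Finset.mem_insert, Finset.mem_singleton, not_or]
            exact ⟨fun h => huI (h ▸ ha), fun h => hvI (h ▸ ha)⟩),
          Finset.card_pair huv]
        omega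
      have hTeq : T = I ∪ {u, v} :=
        (Finset.eq_of_subset_of_card_le hsub (by rw [hcuv]; exact (hcard T hT).le)).symm
      by_cases hci : u = i ∨ v = i <;> by_cases hcj : u = j ∨ v = j
      · rcases hci with h | h
        · rcases hcj with h' | h'
          · exact nij (h.symm.trans h')
          · exact hTne (by rw [hTeq, h, h'])
        · rcases hcj with h' | h'
          · exact hTne (by rw [hTeq, h, h', Finset.pair_comm])
          · exact nij (h.symm.trans h')
      · push_neg at hcj
        have hjT : j ∉ T := by
          rw [hTeq]; exact notmemU hj (fun h => hcj.1 h.symm) (fun h => hcj.2 h.symm)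
        have inner1 : ∀ w : Fin n, w ∈ T → w ∉ I → w ≠ s → w ≠ t → w ≠ i → w ≠ j → i ∈ T →
            ChordsCross s t i w → False := by
          intro w hw hwI hws2 hwt2 hwi hwj hiT hxw
          rcases cross_iff.mp hxw with ⟨c1, c2⟩ | ⟨c1, c2⟩
          · exact absurd c1 (by simp only [inArc_iff']; omega)
          · rcases gsplit c1 hwj with hA | hB
            · exact ws3 s (memSD (memU (Or.inr (Or.inl rfl))) hsT)
                j (memSD (memU (Or.inr (Or.inr rfl))) hjT)
                w (memSD hw (notmemU hwI hws2 hwj)) _ (memSD hiT (notmemU hi nis nij))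
                (cross_iff.mpr (Or.inl ⟨hA, a1⟩))
            · exact ws4 j (memSD (memU (Or.inr (Or.inl rfl))) hjT)
                t (memSD (memU (Or.inr (Or.inr rfl))) htT)
                w (memSD hw (notmemU hwI hwj hwt2)) _ (memSD hiT (notmemU hi nij nit))
                (cross_iff.mpr (Or.inl ⟨hB, a2⟩))
        rcases hci with h | h
        · subst h
          exact inner1 v hv hvI hvs hvt huv.symm hcj.2 hu hx
        · subst h
          exact inner1 u hu huI hus hut huv hcj.1 hv (gcomm₂ hx)
      · push_neg at hci
        have hiT : i ∉ T := by
          rw [hTeq]; exact notmemU hi (fun h => hci.1 h.symm) (fun h => hci.2 h.symm)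
        have inner2 : ∀ w : Fin n, w ∈ T → w ∉ I → w ≠ s → w ≠ t → w ≠ i → w ≠ j → j ∈ T →
            ChordsCross s t j w → False := by
          intro w hw hwI hws2 hwt2 hwi hwj hjT hxw
          rcases cross_iff.mp hxw with ⟨c1, c2⟩ | ⟨c1, c2⟩
          · rcases gsplit c2 hwi with hA | hB
            · exact ws5 t (memSD (memU (Or.inr (Or.inr rfl))) htT)
                i (memSD (memU (Or.inr (Or.inl rfl))) hiT)
                w (memSD hw (notmemU hwI hwi hwt2)) _ (memSD hjT (notmemU hj nij.symm njt))
                (cross_iff.mpr (Or.inl ⟨hA, a3⟩))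
            · exact ws2 i (memSD (memU (Or.inr (Or.inl rfl))) hiT)
                s (memSD (memU (Or.inr (Or.inr rfl))) hsT)
                w (memSD hw (notmemU hwI hwi hws2)) _ (memSD hjT (notmemU hj nij.symm nsj.symm))
                (cross_iff.mpr (Or.inl ⟨hB, a4⟩))
          · exact absurd c2 (by simp only [inArc_iff']; omega)
        rcases hcj with h | h
        · subst h
          exact inner2 v hv hvI hvs hvt hci.2 huv.symm hu hx
        · subst h
          exact inner2 u hu huI hus hut hci.1 huv hv (gcomm₂ hx)
      · push_neg at hci; push_neg at hcj
        have hiT : i ∉ T := by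
          rw [hTeq]; exact notmemU hi (fun h => hci.1 h.symm) (fun h => hci.2 h.symm)
        have hjT : j ∉ T := by
          rw [hTeq]; exact notmemU hj (fun h => hcj.1 h.symm) (fun h => hcj.2 h.symm)
        have n1 := ws1 i (memSD (memU (Or.inr (Or.inl rfl))) hiT)
          j (memSD (memU (Or.inr (Or.inr rfl))) hjT)
          u (memSD hu (notmemU huI hci.1 hcj.1)) v (memSD hv (notmemU hvI hci.2 hcj.2))
        have n2 := ws2 i (memSD (memU (Or.inr (Or.inl rfl))) hiT)
          s (memSD (memU (Or.inr (Or.inr rfl))) hsT)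
          u (memSD hu (notmemU huI hci.1 hus)) v (memSD hv (notmemU hvI hci.2 hvs))
        have n4 := ws4 j (memSD (memU (Or.inr (Or.inl rfl))) hjT)
          t (memSD (memU (Or.inr (Or.inr rfl))) htT)
          u (memSD hu (notmemU huI hcj.1 hut)) v (memSD hv (notmemU hvI hcj.2 hvt))
        have q1 : inArc u v i ↔ inArc u v s :=
          sameSide n2 (Ne.symm hci.1) (Ne.symm hci.2) (Ne.symm hus) (Ne.symm hvs) huv
        have q2 : inArc u v i ↔ inArc u v j :=
          sameSide n1 (Ne.symm hci.1) (Ne.symm hci.2) (Ne.symm hcj.1) (Ne.symm hcj.2) huv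
        have q3 : inArc u v j ↔ inArc u v t :=
          sameSide n4 (Ne.symm hcj.1) (Ne.symm hcj.2) (Ne.symm hut) (Ne.symm hvt) huv
        rcases cross_iff.mp (gswap hx) with ⟨c1, c2⟩ | ⟨c1, c2⟩
        · exact notBoth (q3.mp (q2.mp (q1.mpr c1))) c2
        · exact notBoth (q1.mp (q2.mpr (q3.mpr c1))) c2
    · obtain ⟨w, hwI, hwT⟩ := Finset.not_subset.mp hIT
      have hwu : w ≠ u := fun h => huI (h ▸ hwI)
      have hwv : w ≠ v := fun h => hvI (h ▸ hwI)
      have finS : ∀ a : Fin n, a ∈ I → a ∉ T → ChordsCross a s u v → False := by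
        intro a haI haT hxa
        by_cases hij2 : (u = i ∨ v = i) ∧ (u = j ∨ v = j)
        · have hiT : i ∈ T := by rcases hij2.1 with h | h; exacts [h ▸ hu, h ▸ hv]
          have hjT : j ∈ T := by rcases hij2.2 with h | h; exacts [h ▸ hu, h ▸ hv]
          have hcij : ChordsCross a s i j := by
            rcases hij2.1 with h | h <;> rcases hij2.2 with h' | h'
            · exact absurd (h.symm.trans h') nij
            · rw [← h, ← h']; exact hxa
            · rw [← h, ← h']; exact gcomm₂ hxa
            · exact absurd (h.symm.trans h') nij
          refine lhard a s (Or.inl haI) haT (Or.inr (Or.inl rfl)) hsT ?_ hiT hjT hcij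
          rintro ⟨-, h | h⟩
          exacts [ht (h ▸ haI), nst h]
        · have hcond : (u ≠ i ∧ v ≠ i) ∨ (u ≠ j ∧ v ≠ j) := by
            by_cases h : u = i ∨ v = i
            · exact Or.inr ⟨fun h' => hij2 ⟨h, Or.inl h'⟩, fun h' => hij2 ⟨h, Or.inr h'⟩⟩
            · push_neg at h; exact Or.inl h
          exact refuteS a s u v (Or.inl haI) haT (Or.inr rfl) hsT hu huI hus hv hvI hvs hcond hxa
      have finT : ∀ a : Fin n, a ∈ I → a ∉ T → ChordsCross a t u v → False := by
        intro a haI haT hxa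
        by_cases hij2 : (u = i ∨ v = i) ∧ (u = j ∨ v = j)
        · have hiT : i ∈ T := by rcases hij2.1 with h | h; exacts [h ▸ hu, h ▸ hv]
          have hjT : j ∈ T := by rcases hij2.2 with h | h; exacts [h ▸ hu, h ▸ hv]
          have hcij : ChordsCross a t i j := by
            rcases hij2.1 with h | h <;> rcases hij2.2 with h' | h'
            · exact absurd (h.symm.trans h') nij
            · rw [← h, ← h']; exact hxa
            · rw [← h, ← h']; exact gcomm₂ hxa
            · exact absurd (h.symm.trans h') nij
          refine lhard a t (Or.inl haI) haT (Or.inr (Or.inr rfl)) htT ?_ hiT hjT hcij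
          rintro ⟨h | h, -⟩
          exacts [hs (h ▸ haI), nst h.symm]
        · have hcond : (u ≠ i ∧ v ≠ i) ∨ (u ≠ j ∧ v ≠ j) := by
            by_cases h : u = i ∨ v = i
            · exact Or.inr ⟨fun h' => hij2 ⟨h, Or.inl h'⟩, fun h' => hij2 ⟨h, Or.inr h'⟩⟩
            · push_neg at h; exact Or.inl h
          exact refuteT a t u v (Or.inl haI) haT (Or.inr rfl) htT hu huI hut hv hvI hvt hcond hxa
      rcases cross_iff.mp (gswap hx) with ⟨c1, c2⟩ | ⟨c1, c2⟩ <;>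
        rcases tri huv hwu hwv with h4 | h4
      · exact finT w hwI hwT (gswap (cross_iff.mpr (Or.inl ⟨h4, c2⟩)))
      · exact finS w hwI hwT (gcomm₁ (gswap (cross_iff.mpr (Or.inl ⟨c1, h4⟩))))
      · exact finS w hwI hwT (gswap (cross_iff.mpr (Or.inl ⟨h4, c2⟩)))
      · exact finT w hwI hwT (gcomm₁ (gswap (cross_iff.mpr (Or.inl ⟨c1, h4⟩))))
  -- main argument
  intro p hp q hq u hu v hv hcr
  simp only [Finset.mem_sdiff, Finset.mem_union, Finset.mem_insert,
    Finset.mem_singleton, not_or] at hp hq hu hv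
  obtain ⟨hp1, hpT⟩ := hp
  obtain ⟨hq1, hqT⟩ := hq
  obtain ⟨huT, huI, hus, hut⟩ := hu
  obtain ⟨hvT, hvI, hvs, hvt⟩ := hv
  by_cases hC : (p = s ∨ q = s) ∧ (p = t ∨ q = t)
  · have hsT : s ∉ T := by rcases hC.1 with h | h; exacts [h ▸ hpT, h ▸ hqT]
    have htT : t ∉ T := by rcases hC.2 with h | h; exacts [h ▸ hpT, h ▸ hqT]
    have hx' : ChordsCross s t u v := by
      rcases hC with ⟨hA | hA, hB | hB⟩
      · exact absurd (hA.symm.trans hB) nst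
      · rw [← hA, ← hB]; exact hcr
      · rw [← hA, ← hB]; exact gcomm₁ hcr
      · exact absurd (hA.symm.trans hB) nst
    exact lC u v hsT htT huT huI hus hut hvT hvI hvs hvt hx'
  · by_cases hij2 : (u = i ∨ v = i) ∧ (u = j ∨ v = j)
    · have hiT : i ∈ T := by rcases hij2.1 with h | h; exacts [h ▸ huT, h ▸ hvT]
      have hjT : j ∈ T := by rcases hij2.2 with h | h; exacts [h ▸ huT, h ▸ hvT]
      have hcij : ChordsCross p q i j := by
        rcases hij2.1 with h | h <;> rcases hij2.2 with h' | h'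
        · exact absurd (h.symm.trans h') nij
        · rw [← h, ← h']; exact hcr
        · rw [← h, ← h']; exact gcomm₂ hcr
        · exact absurd (h.symm.trans h') nij
      exact lhard p q hp1 hpT hq1 hqT hC hiT hjT hcij
    · have hcond : (u ≠ i ∧ v ≠ i) ∨ (u ≠ j ∧ v ≠ j) := by
        by_cases h : u = i ∨ v = i
        · exact Or.inr ⟨fun h' => hij2 ⟨h, Or.inl h'⟩, fun h' => hij2 ⟨h, Or.inr h'⟩⟩
        · push_neg at h; exact Or.inl h
      by_cases hpt : p = t ∨ q = t
      · have hps2 : p ≠ s ∧ q ≠ s :=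
          ⟨fun h => hC ⟨Or.inl h, hpt⟩, fun h => hC ⟨Or.inr h, hpt⟩⟩
        refine refuteT p q u v ?_ hpT ?_ hqT huT huI hut hvT hvI hvt hcond hcr
        · rcases hp1 with h|h|h; exacts [Or.inl h, absurd h hps2.1, Or.inr h]
        · rcases hq1 with h|h|h; exacts [Or.inl h, absurd h hps2.2, Or.inr h]
      · push_neg at hpt
        refine refuteS p q u v ?_ hpT ?_ hqT huT huI hus hvT hvI hvs hcond hcr
        · rcases hp1 with h|h|h; exacts [Or.inl h, Or.inr h, absurd h hpt.1]
        · rcases hq1 with h|h|h; exacts [Or.inl h, Or.inr h, absurd h hpt.2]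

/-- Scott's (2,4)-exchange preserves pairwise weak separation: if a family
`C` of pairwise weakly separated `k`-subsets contains the five sets
`I∪{i,j}`, `I∪{i,s}`, `I∪{s,j}`, `I∪{j,t}`, `I∪{i,t}`, where `i<s<j<t`
(so the pairs `{i,j}` and `{s,t}` cross) and `I` is a `(k−2)`-set disjoint
from `{i,j,s,t}`, then the family obtained by replacing `I∪{i,j}` with
`I∪{s,t}` is again pairwise weakly separated. -/
theorem exchange_preserves_weaklySeparated {n k : ℕ}
    (C : Finset (Finset (Fin n)))
    (hcard : ∀ S ∈ C, S.card = k)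
    (hws : ∀ S ∈ C, ∀ T ∈ C, WeaklySeparated S T)
    (I : Finset (Fin n)) (hI : I.card + 2 = k)
    (i s j t : Fin n) (h1 : i < s) (h2 : s < j) (h3 : j < t)
    (hi : i ∉ I) (hs : s ∉ I) (hj : j ∉ I) (ht : t ∉ I)
    (m1 : I ∪ {i, j} ∈ C) (m2 : I ∪ {i, s} ∈ C) (m3 : I ∪ {s, j} ∈ C)
    (m4 : I ∪ {j, t} ∈ C) (m5 : I ∪ {i, t} ∈ C) :
    ∀ S ∈ insert (I ∪ {s, t}) (C.erase (I ∪ {i, j})),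
      ∀ T ∈ insert (I ∪ {s, t}) (C.erase (I ∪ {i, j})),
        WeaklySeparated S T := by
  have hk := key C hcard hws I hI i s j t h1 h2 h3 hi hs hj ht m1 m2 m3 m4 m5
  intro S hS T hT
  rcases Finset.mem_insert.mp hS with rfl | hS'
  · rcases Finset.mem_insert.mp hT with rfl | hT'
    · intro a ha
      rw [Finset.sdiff_self] at ha
      exact absurd ha (Finset.notMem_empty a)
    · obtain ⟨hTne, hTC⟩ := Finset.mem_erase.mp hT'
      exact hk T hTC hTne
  · rcases Finset.mem_insert.mp hT with rfl | hT'
    · obtain ⟨hSne, hSC⟩ := Finset.mem_erase.mp hS'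
      exact WS_symm (hk S hSC hSne)
    · obtain ⟨_, hSC⟩ := Finset.mem_erase.mp hS'
      obtain ⟨_, hTC⟩ := Finset.mem_erase.mp hT'
      exact hws S hSC T hTC
end

section
/- Whenever the four indices i<s<j<t and a set I of size k−2 disjoint from them are given, the Schur polynomial identity s_{λ_{I∪{i,j}}} · s_{λ_{I∪{s,t}}} = s_{λ_{I∪{i,s}}} · s_{λ_{I∪{j,t}}} + s_{λ_{I∪{i,t}}} · s_{λ_{I∪{j,s}}} holds in k variables, where for a k-subset J = {j₁ < ... < j_k} of {1,...,n} the partition λ_J is defined by (λ_J)_r = j_r − r. -/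
open MvPolynomial

/-- The Schur polynomial `s_{λ_J}` in `k` variables attached to a `k`-subset
`J = {j₁ < … < j_k}` of `{1,…,n}` (where `(λ_J)_r = j_r − r`), expressed via
the bialternant formula `s_{λ_J} = det(x_a^{j_r−1}) / det(x_a^{r−1})` as an
element of the fraction field; `0` if `J` is not a `k`-set. -/
noncomputable def schurOf (k : ℕ) (J : Finset ℕ) :
    FractionRing (MvPolynomial (Fin k) ℚ) :=
  if h : J.card = k then
    algebraMap (MvPolynomial (Fin k) ℚ) (FractionRing (MvPolynomial (Fin k) ℚ))
        (Matrix.det (Matrix.of fun a r : Fin k =>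
          (X a : MvPolynomial (Fin k) ℚ) ^ (J.orderEmbOfFin h r - 1))) /
      algebraMap (MvPolynomial (Fin k) ℚ) (FractionRing (MvPolynomial (Fin k) ℚ))
        (Matrix.det (Matrix.of fun a r : Fin k =>
          (X a : MvPolynomial (Fin k) ℚ) ^ (r : ℕ)))
  else 0

section Aux
open Matrix Equiv Finset


theorem det_exchange {R : Type*} [CommRing R] {N : Type*} [DecidableEq N] [Fintype N]
    (X Y : Matrix N N R) (j0 : N) :
    X.det * Y.det = ∑ l, (X.updateCol j0 (fun p => Y p l)).det *
      (Y.updateCol l (fun p => X p j0)).det := by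
  have key : ∀ u : N → R, Matrix.cramer X (Y *ᵥ u) j0
      = ∑ l, (X.updateCol j0 (fun p => Y p l)).det * u l := by
    intro u
    have : (Y *ᵥ u) = ∑ l, u l • (fun p => Y p l) := by
      ext p; simp [Matrix.mulVec, dotProduct, mul_comm, Finset.sum_apply]
    rw [this, map_sum]
    simp [Matrix.cramer_apply, mul_comm]
  have h2 := key (Matrix.cramer Y (fun p => X p j0))
  rw [Matrix.mulVec_cramer, LinearMap.map_smul] at h2
  simp only [Pi.smul_apply, smul_eq_mul, Matrix.cramer_apply, Matrix.updateCol_eq_self] at h2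
  rw [mul_comm, h2]

/-- counting lemma: `e_P r < b ↔ r < #(P.filter (· < b))`. -/
theorem orderEmbOfFin_lt_iff {P : Finset ℕ} {N : ℕ} (hP : P.card = N) (b : ℕ) (r : Fin N) :
    P.orderEmbOfFin hP r < b ↔ (r : ℕ) < (P.filter (· < b)).card := by
  set e := P.orderEmbOfFin hP with he
  constructor
  · intro h
    have hsub : (Finset.Iic r).image (fun x => e x) ⊆ P.filter (· < b) := by
      intro y hy
      simp only [Finset.mem_image, Finset.mem_Iic] at hy
      obtain ⟨x, hx, rfl⟩ := hy
      refine Finset.mem_filter.2 ⟨Finset.orderEmbOfFin_mem P hP x, lt_of_le_of_lt ?_ h⟩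
      exact e.monotone hx
    have := Finset.card_le_card hsub
    rwa [Finset.card_image_of_injective _ e.injective, Fin.card_Iic] at this
  · intro h
    by_contra hc
    push_neg at hc
    have hsub : P.filter (· < b) ⊆ (Finset.Iio r).image (fun x => e x) := by
      intro y hy
      rw [Finset.mem_filter] at hy
      obtain ⟨x, hx⟩ : ∃ x, e x = y := by
        have : y ∈ Set.range e := by rw [Finset.range_orderEmbOfFin]; exact hy.1
        exact this
      refine Finset.mem_image.2 ⟨x, Finset.mem_Iio.2 ?_, hx⟩
      rw [← e.lt_iff_lt]
      exact lt_of_lt_of_le (hx ▸ hy.2) hc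
    have := Finset.card_le_card hsub
    rw [Finset.card_image_of_injective _ e.injective, Fin.card_Iio] at this
    omega

/-- `e_J pos = b` where `J = insert b P`, `pos = #(P.filter (· < b))`. -/
theorem orderEmbOfFin_insert_self {P : Finset ℕ} {N : ℕ} (hP : P.card = N) {b : ℕ} (hb : b ∉ P)
    (hJ : (insert b P).card = N + 1) :
    (insert b P).orderEmbOfFin hJ ⟨(P.filter (· < b)).card, by
      have := Finset.card_filter_le P (· < b); omega⟩ = b := by
  set J := insert b P with hJdef
  set pos := (P.filter (· < b)).card with hpos
  have hposlt : pos < N + 1 := by have := Finset.card_filter_le P (· < b); omega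
  have hfilter : (J.filter (· < b)).card = pos := by
    rw [hJdef, Finset.filter_insert, if_neg (lt_irrefl b), hpos]
  set e := J.orderEmbOfFin hJ with he
  -- b is in the range of e
  obtain ⟨y₀, hy₀⟩ : ∃ y₀, e y₀ = b := by
    have : b ∈ Set.range e := by
      rw [Finset.range_orderEmbOfFin]; exact Finset.mem_insert_self b P
    exact this
  have h1 : ¬ ((y₀ : ℕ) < pos) := by
    intro h
    have := (orderEmbOfFin_lt_iff hJ b y₀).2 (by rw [hfilter]; exact h)
    rw [← he, hy₀] at this
    omega
  have h2 : ¬ (pos < (y₀ : ℕ)) := by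
    intro h
    have hlt : e ⟨pos, hposlt⟩ < e y₀ := by
      rw [e.lt_iff_lt]; exact h
    rw [hy₀] at hlt
    have := (orderEmbOfFin_lt_iff hJ b ⟨pos, hposlt⟩).1 hlt
    rw [hfilter] at this
    exact lt_irrefl _ this
  have : y₀ = ⟨pos, hposlt⟩ := by
    apply Fin.ext; simp only; omega
  rw [← this]; exact hy₀

/-- The sorted enumeration of `insert b P` is `Fin.cons b e_P ∘ cycleRange pos`. -/
theorem orderEmbOfFin_insert_eq {P : Finset ℕ} {N : ℕ} (hP : P.card = N) {b : ℕ} (hb : b ∉ P)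
    (hJ : (insert b P).card = N + 1) (r : Fin (N + 1)) :
    (insert b P).orderEmbOfFin hJ r
      = (Fin.cons b ⇑(P.orderEmbOfFin hP) : Fin (N+1) → ℕ)
          ((Fin.cycleRange ⟨(P.filter (· < b)).card, by
            have := Finset.card_filter_le P (· < b); omega⟩) r) := by
  set posF : Fin (N+1) := ⟨(P.filter (· < b)).card, by
            have := Finset.card_filter_le P (· < b); omega⟩ with hposF
  set e := (insert b P).orderEmbOfFin hJ with he
  have hA : e posF = b := orderEmbOfFin_insert_self hP hb hJ
  -- tail identification
  have hB : ∀ x : Fin N, P.orderEmbOfFin hP x = e (posF.succAbove x) := by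
    have := Finset.orderEmbOfFin_unique hP
      (f := fun x : Fin N => e (posF.succAbove x)) ?_ ?_
    · intro x; rw [← this]
    · intro x
      have hmem : e (posF.succAbove x) ∈ insert b P := Finset.orderEmbOfFin_mem _ hJ _
      rcases Finset.mem_insert.1 hmem with h | h
      · exfalso
        have : posF.succAbove x = posF := e.injective (by rw [hA, h])
        exact Fin.succAbove_ne posF x this
      · exact h
    · exact e.strictMono.comp (Fin.strictMono_succAbove posF)
  -- now the pointwise statement
  rcases Fin.eq_zero_or_eq_succ (posF.cycleRange r) with h0 | ⟨x, hx⟩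
  · have : r = posF := by
      have := Fin.cycleRange_self posF
      apply (Fin.cycleRange posF).injective; rw [h0, this]
    rw [h0, this, Fin.cons_zero, hA]
  · have : r = posF.succAbove x := by
      apply (Fin.cycleRange posF).injective
      rw [hx, Fin.cycleRange_succAbove]
    rw [hx, this, Fin.cons_succ, hB]

section Dets
variable {R : Type*} [CommRing R]

/-- determinant of the matrix with columns `c (h r)`. -/
noncomputable def Dmat {k : ℕ} (c : ℕ → Fin k → R) (h : Fin k → ℕ) : R :=
  Matrix.det (Matrix.of fun p r => c (h r) p)

theorem Dmat_comp_perm {k : ℕ} (c : ℕ → Fin k → R) (h : Fin k → ℕ) (σ : Equiv.Perm (Fin k)) :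
    Dmat c (h ∘ σ) = (Equiv.Perm.sign σ : ℤ) * Dmat c h := by
  have := Matrix.det_permute' σ (Matrix.of fun p r => c (h r) p)
  simpa [Dmat, Matrix.submatrix, Function.comp] using this

theorem neg_one_pow_mul_self (e : ℕ) : ((-1 : R) ^ e) * ((-1 : R) ^ e) = 1 := by
  rw [← pow_add]
  exact Even.neg_one_pow ⟨e, rfl⟩

/-- insertion step. -/
theorem Dmat_cons {N : ℕ} (c : ℕ → Fin (N+1) → R) {P : Finset ℕ} (hP : P.card = N) {b : ℕ}
    (hb : b ∉ P) (hJ : (insert b P).card = N + 1) :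
    Dmat c (Fin.cons b ⇑(P.orderEmbOfFin hP))
      = (-1 : R) ^ (P.filter (· < b)).card * Dmat c ⇑((insert b P).orderEmbOfFin hJ) := by
  set posF : Fin (N+1) := ⟨(P.filter (· < b)).card, by
            have := Finset.card_filter_le P (· < b); omega⟩ with hposF
  have heq : ⇑((insert b P).orderEmbOfFin hJ)
      = (Fin.cons b ⇑(P.orderEmbOfFin hP) : Fin (N+1) → ℕ) ∘ ⇑(Fin.cycleRange posF) := by
    funext r
    exact orderEmbOfFin_insert_eq hP hb hJ r
  have h2 : Dmat c ⇑((insert b P).orderEmbOfFin hJ)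
      = (-1 : R) ^ (P.filter (· < b)).card * Dmat c (Fin.cons b ⇑(P.orderEmbOfFin hP)) := by
    rw [heq, Dmat_comp_perm]
    congr 1
    rw [Fin.sign_cycleRange]
    push_cast
    norm_num
    rfl
  rw [h2, ← mul_assoc, neg_one_pow_mul_self, one_mul]

/-- lifting a permutation of the tail through `Fin.cons`. -/
theorem Dmat_cons_comp {N : ℕ} (c : ℕ → Fin (N+1) → R) (a : ℕ) (h : Fin N → ℕ)
    (σ : Equiv.Perm (Fin N)) :
    Dmat c (Fin.cons a (h ∘ σ)) = (Equiv.Perm.sign σ : ℤ) * Dmat c (Fin.cons a h) := by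
  have key : (Fin.cons a (h ∘ σ) : Fin (N+1) → ℕ)
      = (Fin.cons a h : Fin (N+1) → ℕ) ∘ ⇑(Equiv.Perm.decomposeFin.symm (0, σ)) := by
    funext r
    induction r using Fin.cases with
    | zero => simp [Equiv.Perm.decomposeFin_symm_apply_zero]
    | succ x => simp [Equiv.Perm.decomposeFin_symm_apply_succ]
  rw [key, Dmat_comp_perm]
  congr 2
  rw [Equiv.Perm.decomposeFin.symm_sign, if_pos rfl, one_mul]
end Dets

section Dets2
variable {R : Type*} [CommRing R]

theorem Dmat_cons_cons {m : ℕ} (c : ℕ → Fin (m+2) → R) {I : Finset ℕ} (hm : I.card = m)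
    {a b : ℕ} (ha : a ∉ I) (hb : b ∉ I) (hab : a ≠ b)
    (hJ : (insert a (insert b I)).card = m + 2) :
    Dmat c (Fin.cons a (Fin.cons b ⇑(I.orderEmbOfFin hm)) : Fin (m+2) → ℕ)
      = (-1 : R) ^ (((insert b I).filter (· < a)).card + (I.filter (· < b)).card)
        * Dmat c ⇑((insert a (insert b I)).orderEmbOfFin hJ) := by
  have hbI : (insert b I).card = m + 1 := by
    rw [Finset.card_insert_of_notMem hb, hm]
  have habI : a ∉ insert b I := by simp [hab, ha]
  set posb : Fin (m+1) := ⟨(I.filter (· < b)).card, by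
      have := Finset.card_filter_le I (· < b); omega⟩ with hposb
  have heq : ⇑((insert b I).orderEmbOfFin hbI)
      = (Fin.cons b ⇑(I.orderEmbOfFin hm) : Fin (m+1) → ℕ) ∘ ⇑(Fin.cycleRange posb) :=
    funext (orderEmbOfFin_insert_eq hm hb hbI)
  have heq2 : (Fin.cons b ⇑(I.orderEmbOfFin hm) : Fin (m+1) → ℕ)
      = ⇑((insert b I).orderEmbOfFin hbI) ∘ ⇑(Fin.cycleRange posb)⁻¹ := by
    funext x
    rw [heq]
    simp [Function.comp]
  have step1 : Dmat c (Fin.cons a (Fin.cons b ⇑(I.orderEmbOfFin hm)) : Fin (m+2) → ℕ)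
      = (-1 : R) ^ ((I.filter (· < b)).card)
        * Dmat c (Fin.cons a ⇑((insert b I).orderEmbOfFin hbI) : Fin (m+2) → ℕ) := by
    rw [heq2]
    rw [Dmat_cons_comp (N := m+1) c a ⇑((insert b I).orderEmbOfFin hbI) (Fin.cycleRange posb)⁻¹]
    congr 1
    rw [map_inv, Fin.sign_cycleRange]
    push_cast
    norm_num
    rfl
  have step2 : Dmat c (Fin.cons a ⇑((insert b I).orderEmbOfFin hbI) : Fin (m+2) → ℕ)
      = (-1 : R) ^ (((insert b I).filter (· < a)).card)
        * Dmat c ⇑((insert a (insert b I)).orderEmbOfFin hJ) :=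
    Dmat_cons (N := m+1) c hbI habI hJ
  rw [step1, step2, ← mul_assoc, ← pow_add, Nat.add_comm]

end Dets2

section Dets3
variable {R : Type*} [CommRing R]

theorem updateColumn_cons_zero {N : ℕ} (c : ℕ → Fin (N+1) → R) (a w : ℕ) (h : Fin N → ℕ) :
    (Matrix.of fun p r => c ((Fin.cons a h : Fin (N+1) → ℕ) r) p).updateCol 0
        (fun p => c w p)
      = Matrix.of (fun p r => c ((Fin.cons w h : Fin (N+1) → ℕ) r) p) := by
  ext p r
  rw [Matrix.updateCol_apply]
  induction r using Fin.cases with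
  | zero => simp
  | succ x => simp [(Fin.succ_ne_zero x)]

theorem updateColumn_cons_succ {N : ℕ} (c : ℕ → Fin (N+1) → R) (a w : ℕ) (h : Fin N → ℕ)
    (x : Fin N) :
    (Matrix.of fun p r => c ((Fin.cons a h : Fin (N+1) → ℕ) r) p).updateCol (Fin.succ x)
        (fun p => c w p)
      = Matrix.of (fun p r => c ((Fin.cons a (Function.update h x w) : Fin (N+1) → ℕ) r) p) := by
  ext p r
  rw [Matrix.updateCol_apply]
  induction r using Fin.cases with
  | zero => simp [(Fin.succ_ne_zero x).symm]
  | succ y =>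
      by_cases hxy : y = x
      · subst hxy; simp
      · simp [Function.update, hxy, Fin.succ_inj, Ne.symm hxy]

/-- The three-term exchange identity for `p a b := Dmat c (cons a (cons b h))`. -/
theorem p_exchange {m : ℕ} (c : ℕ → Fin (m+2) → R) (h : Fin m → ℕ) (i s j t : ℕ) :
    Dmat c (Fin.cons i (Fin.cons j h)) * Dmat c (Fin.cons s (Fin.cons t h))
      = Dmat c (Fin.cons s (Fin.cons j h)) * Dmat c (Fin.cons i (Fin.cons t h))
        + Dmat c (Fin.cons t (Fin.cons j h)) * Dmat c (Fin.cons s (Fin.cons i h)) := by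
  classical
  set X : Matrix (Fin (m+2)) (Fin (m+2)) R :=
    Matrix.of fun p r => c ((Fin.cons i (Fin.cons j h) : Fin (m+2) → ℕ) r) p with hX
  set Y : Matrix (Fin (m+2)) (Fin (m+2)) R :=
    Matrix.of fun p r => c ((Fin.cons s (Fin.cons t h) : Fin (m+2) → ℕ) r) p with hY
  have hexch := det_exchange X Y (0 : Fin (m+2))
  have hXcol : (fun p => X p 0) = fun p => c i p := by funext p; simp [hX]
  have hYcol : ∀ l, (fun p => Y p l) = fun p => c ((Fin.cons s (Fin.cons t h) : Fin (m+2) → ℕ) l) p := by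
    intro l; funext p; simp [hY]
  rw [Fin.sum_univ_succ, Fin.sum_univ_succ] at hexch
  -- l = 0 term
  have T0 : (X.updateCol 0 fun p => Y p 0).det * (Y.updateCol 0 fun p => X p 0).det
      = Dmat c (Fin.cons s (Fin.cons j h)) * Dmat c (Fin.cons i (Fin.cons t h)) := by
    rw [hXcol, hYcol 0]
    simp only [Fin.cons_zero]
    rw [hX, hY, updateColumn_cons_zero, updateColumn_cons_zero]
    rfl
  -- l = 1 term
  have hupd : Function.update (Fin.cons t h : Fin (m+1) → ℕ) 0 i = Fin.cons i h := by
    funext y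
    induction y using Fin.cases with
    | zero => simp
    | succ x => simp [Function.update, (Fin.succ_ne_zero x)]
  have T1 : (X.updateCol 0 fun p => Y p (Fin.succ 0)).det *
        (Y.updateCol (Fin.succ 0) fun p => X p 0).det
      = Dmat c (Fin.cons t (Fin.cons j h)) * Dmat c (Fin.cons s (Fin.cons i h)) := by
    rw [hXcol, hYcol (Fin.succ 0)]
    simp only [Fin.cons_succ, Fin.cons_zero]
    rw [hX, hY, updateColumn_cons_zero, updateColumn_cons_succ, hupd]
    rfl
  -- remaining terms vanish
  have TZ : ∀ x : Fin m, (X.updateCol 0 fun p => Y p (Fin.succ (Fin.succ x))).det *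
        (Y.updateCol (Fin.succ (Fin.succ x)) fun p => X p 0).det = 0 := by
    intro x
    have : (X.updateCol 0 fun p => Y p (Fin.succ (Fin.succ x))).det = 0 := by
      rw [hYcol (Fin.succ (Fin.succ x))]
      simp only [Fin.cons_succ]
      rw [hX, updateColumn_cons_zero]
      apply Matrix.det_zero_of_column_eq (i := (0 : Fin (m+2))) (j := Fin.succ (Fin.succ x))
      · exact (Fin.succ_ne_zero _).symm
      · intro p; simp
    rw [this, zero_mul]
  rw [T0, T1] at hexch
  have : ∑ x : Fin m, (X.updateCol 0 fun p => Y p (Fin.succ (Fin.succ x))).det *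
      (Y.updateCol (Fin.succ (Fin.succ x)) fun p => X p 0).det = 0 :=
    Finset.sum_eq_zero fun x _ => TZ x
  rw [this, add_zero] at hexch
  exact hexch

end Dets3

section Key
variable {R : Type*} [CommRing R]

theorem Dmat_congr_set {k : ℕ} (c : ℕ → Fin k → R) {A B : Finset ℕ} (hAB : A = B)
    (hA : A.card = k) (hB : B.card = k) :
    Dmat c ⇑(A.orderEmbOfFin hA) = Dmat c ⇑(B.orderEmbOfFin hB) := by
  subst hAB; rfl

theorem filt_insert_card {I : Finset ℕ} {a b : ℕ} (hb : b ∉ I) :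
    ((insert b I).filter (· < a)).card
      = (I.filter (· < a)).card + (if b < a then 1 else 0) := by
  rw [Finset.filter_insert]
  split
  · rw [Finset.card_insert_of_notMem (fun hmem => hb (Finset.mem_of_mem_filter b hmem))]
  · rw [Nat.add_zero]

theorem sign_flip {e : ℕ} {x y : R} (h : x = (-1 : R) ^ e * y) : y = (-1 : R) ^ e * x := by
  rw [h, ← mul_assoc, neg_one_pow_mul_self, one_mul]

theorem key_pluecker {m : ℕ} (c : ℕ → Fin (m+2) → R) (I : Finset ℕ) (hm : I.card = m)
    (i s j t : ℕ) (h1 : i < s) (h2 : s < j) (h3 : j < t)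
    (hiI : i ∉ I) (hsI : s ∉ I) (hjI : j ∉ I) (htI : t ∉ I)
    (E1 : (insert i (insert j I)).card = m+2)
    (E2 : (insert s (insert t I)).card = m+2)
    (E3 : (insert i (insert s I)).card = m+2)
    (E4 : (insert j (insert t I)).card = m+2)
    (E5 : (insert i (insert t I)).card = m+2)
    (E6 : (insert j (insert s I)).card = m+2) :
    Dmat c ⇑((insert i (insert j I)).orderEmbOfFin E1) *
        Dmat c ⇑((insert s (insert t I)).orderEmbOfFin E2)
      = Dmat c ⇑((insert i (insert s I)).orderEmbOfFin E3) *
          Dmat c ⇑((insert j (insert t I)).orderEmbOfFin E4)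
        + Dmat c ⇑((insert i (insert t I)).orderEmbOfFin E5) *
            Dmat c ⇑((insert j (insert s I)).orderEmbOfFin E6) := by
  set eI := ⇑(I.orderEmbOfFin hm) with heI
  set n : ℕ → ℕ := fun x => (I.filter (· < x)).card with hn
  set D1 := Dmat c ⇑((insert i (insert j I)).orderEmbOfFin E1) with hD1d
  set D2 := Dmat c ⇑((insert s (insert t I)).orderEmbOfFin E2) with hD2d
  set D3 := Dmat c ⇑((insert i (insert s I)).orderEmbOfFin E3) with hD3d
  set D4 := Dmat c ⇑((insert j (insert t I)).orderEmbOfFin E4) with hD4d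
  set D5 := Dmat c ⇑((insert i (insert t I)).orderEmbOfFin E5) with hD5d
  set D6 := Dmat c ⇑((insert j (insert s I)).orderEmbOfFin E6) with hD6d
  have hstep := p_exchange c eI i s j t
  -- six sign formulas
  have hij : Dmat c (Fin.cons i (Fin.cons j eI)) = (-1 : R)^(n i + 0 + n j) * D1 := by
    have h0 := Dmat_cons_cons c hm hiI hjI (by omega) E1
    rwa [filt_insert_card hjI, if_neg (by omega : ¬ j < i)] at h0
  have hst : Dmat c (Fin.cons s (Fin.cons t eI)) = (-1 : R)^(n s + 0 + n t) * D2 := by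
    have h0 := Dmat_cons_cons c hm hsI htI (by omega) E2
    rwa [filt_insert_card htI, if_neg (by omega : ¬ t < s)] at h0
  have hit : Dmat c (Fin.cons i (Fin.cons t eI)) = (-1 : R)^(n i + 0 + n t) * D5 := by
    have h0 := Dmat_cons_cons c hm hiI htI (by omega) E5
    rwa [filt_insert_card htI, if_neg (by omega : ¬ t < i)] at h0
  have hsj : Dmat c (Fin.cons s (Fin.cons j eI)) = (-1 : R)^(n s + 0 + n j) * D6 := by
    have hset : insert s (insert j I) = insert j (insert s I) := Finset.insert_comm s j I
    have hcard : (insert s (insert j I)).card = m + 2 := by rw [hset]; exact E6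
    have h0 := Dmat_cons_cons c hm hsI hjI (by omega) hcard
    rw [Dmat_congr_set c hset hcard E6] at h0
    rwa [filt_insert_card hjI, if_neg (by omega : ¬ j < s)] at h0
  have htj : Dmat c (Fin.cons t (Fin.cons j eI)) = (-1 : R)^(n t + 1 + n j) * D4 := by
    have hset : insert t (insert j I) = insert j (insert t I) := Finset.insert_comm t j I
    have hcard : (insert t (insert j I)).card = m + 2 := by rw [hset]; exact E4
    have h0 := Dmat_cons_cons c hm htI hjI (by omega) hcard
    rw [Dmat_congr_set c hset hcard E4] at h0
    rwa [filt_insert_card hjI, if_pos (by omega : j < t)] at h0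
  have hsi : Dmat c (Fin.cons s (Fin.cons i eI)) = (-1 : R)^(n s + 1 + n i) * D3 := by
    have hset : insert s (insert i I) = insert i (insert s I) := Finset.insert_comm s i I
    have hcard : (insert s (insert i I)).card = m + 2 := by rw [hset]; exact E3
    have h0 := Dmat_cons_cons c hm hsI hiI (by omega) hcard
    rw [Dmat_congr_set c hset hcard E3] at h0
    rwa [filt_insert_card hiI, if_pos (by omega : i < s)] at h0
  rw [hij, hst, hit, hsj, htj, hsi] at hstep
  have hEi := neg_one_pow_mul_self (R := R) (n i)
  have hEj := neg_one_pow_mul_self (R := R) (n j)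
  have hEs := neg_one_pow_mul_self (R := R) (n s)
  have hEt := neg_one_pow_mul_self (R := R) (n t)
  set Ei := (-1 : R)^(n i) with hEid
  set Ej := (-1 : R)^(n j) with hEjd
  set Es := (-1 : R)^(n s) with hEsd
  set Et := (-1 : R)^(n t) with hEtd
  simp only [pow_add, pow_zero, pow_one, ← hEid, ← hEjd, ← hEsd, ← hEtd] at hstep
  linear_combination (Ei*Ej*Es*Et) * hstep
    - (D1*D2 - D3*D4 - D5*D6) * hEi
    - (D1*D2 - D3*D4 - D5*D6) * (Ei*Ei) * hEj
    - (D1*D2 - D3*D4 - D5*D6) * (Ei*Ei*Ej*Ej) * hEs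
    - (D1*D2 - D3*D4 - D5*D6) * (Ei*Ei*Ej*Ej*Es*Es) * hEt

end Key

end Aux

section Main
open Matrix

/-- The short Plücker relation for Schur polynomials: for `i < s < j < t`
in `{1,…,n}` and a `(k−2)`-set `I ⊆ {1,…,n}` disjoint from them,
`s_{λ_{I∪{i,j}}} s_{λ_{I∪{s,t}}}
  = s_{λ_{I∪{i,s}}} s_{λ_{I∪{j,t}}} + s_{λ_{I∪{i,t}}} s_{λ_{I∪{j,s}}}`. -/
theorem schur_short_pluecker {n k : ℕ} (I : Finset ℕ)
    (hI : I.card + 2 = k) (hIrange : ∀ x ∈ I, 1 ≤ x ∧ x ≤ n)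
    (i s j t : ℕ) (hi1 : 1 ≤ i) (htn : t ≤ n)
    (h1 : i < s) (h2 : s < j) (h3 : j < t)
    (hiI : i ∉ I) (hsI : s ∉ I) (hjI : j ∉ I) (htI : t ∉ I) :
    schurOf k (I ∪ {i, j}) * schurOf k (I ∪ {s, t}) =
      schurOf k (I ∪ {i, s}) * schurOf k (I ∪ {j, t}) +
        schurOf k (I ∪ {i, t}) * schurOf k (I ∪ {j, s}) := by
  subst hI
  have hU1 : I ∪ {i, j} = insert i (insert j I) := by ext x; simp [or_comm, or_assoc]
  have hU2 : I ∪ {s, t} = insert s (insert t I) := by ext x; simp [or_comm, or_assoc]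
  have hU3 : I ∪ {i, s} = insert i (insert s I) := by ext x; simp [or_comm, or_assoc]
  have hU4 : I ∪ {j, t} = insert j (insert t I) := by ext x; simp [or_comm, or_assoc]
  have hU5 : I ∪ {i, t} = insert i (insert t I) := by ext x; simp [or_comm, or_assoc]
  have hU6 : I ∪ {j, s} = insert j (insert s I) := by ext x; simp [or_comm, or_assoc]
  rw [hU1, hU2, hU3, hU4, hU5, hU6]
  have hcard : ∀ a b : ℕ, a ≠ b → a ∉ I → b ∉ I →
      (insert a (insert b I)).card = I.card + 2 := by
    intro a b hab ha hb
    have ha' : a ∉ insert b I := by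
      intro h; rcases Finset.mem_insert.1 h with h | h; exact hab h; exact ha h
    rw [Finset.card_insert_of_notMem ha', Finset.card_insert_of_notMem hb]
  have E1 := hcard i j (by omega) hiI hjI
  have E2 := hcard s t (by omega) hsI htI
  have E3 := hcard i s (by omega) hiI hsI
  have E4 := hcard j t (by omega) hjI htI
  have E5 := hcard i t (by omega) hiI htI
  have E6 := hcard j s (by omega) hjI hsI
  simp only [schurOf]
  rw [dif_pos E1, dif_pos E2, dif_pos E3, dif_pos E4, dif_pos E5, dif_pos E6]
  set φ : MvPolynomial (Fin (I.card + 2)) ℚ →+* FractionRing (MvPolynomial (Fin (I.card + 2)) ℚ) :=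
    algebraMap (MvPolynomial (Fin (I.card + 2)) ℚ)
    (FractionRing (MvPolynomial (Fin (I.card + 2)) ℚ)) with hφ
  rw [div_mul_div_comm, div_mul_div_comm, div_mul_div_comm, ← add_div,
    ← _root_.map_mul φ, ← _root_.map_mul φ, ← _root_.map_mul φ, ← _root_.map_mul φ,
    ← _root_.map_add φ]
  congr 1
  exact congrArg _ (key_pluecker
    (c := fun w (a : Fin (I.card + 2)) => (X a : MvPolynomial (Fin (I.card + 2)) ℚ) ^ (w - 1))
    I rfl i s j t h1 h2 h3 hiI hsI hjI htI E1 E2 E3 E4 E5 E6)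

end Main
end

section
/- For distinct vectors v₁,...,v₆ in ℝ³ representing six points of G(3,6), the function Y defined by Y = Δ^{236}Δ^{145} − Δ^{123}Δ^{456} equals the compound determinant det(v₆×v₁, v₂×v₃, v₄×v₅). -/
open Matrix

/-- The determinant of the 3×3 matrix whose *columns* are `a`, `b`, `c`. -/
def colDet (a b c : Fin 3 → ℝ) : ℝ :=
  Matrix.det (Matrix.of fun i j => ![a, b, c] j i)

/-- For distinct `v₁,…,v₆ ∈ ℝ³`, the cluster variable
`Y = Δ^{236} Δ^{145} − Δ^{123} Δ^{456}` equals the compound determinant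
`det(v₆×v₁, v₂×v₃, v₄×v₅)`. -/
theorem Y_eq_compound_det (v : Fin 6 → (Fin 3 → ℝ))
    (hdist : ∀ a b : Fin 6, a ≠ b → v a ≠ v b) :
    colDet (v 1) (v 2) (v 5) * colDet (v 0) (v 3) (v 4) -
        colDet (v 0) (v 1) (v 2) * colDet (v 3) (v 4) (v 5) =
      colDet (v 5 ⨯₃ v 0) (v 1 ⨯₃ v 2) (v 3 ⨯₃ v 4) := by
  simp only [colDet, det_fin_three, crossProduct, LinearMap.mk₂_apply, of_apply,
    cons_val_zero, cons_val_one, cons_val_two, head_cons, tail_cons, head_cons]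
  ring
end

section
/- In G(3,6), for generic v₁,...,v₆ ∈ ℝ³ with Δ^{346} ≠ 0, the exchange relation Δ^{346}·Y = Δ^{146}Δ^{236}Δ^{345} + Δ^{136}Δ^{234}Δ^{456} holds, where Y = Δ^{236}Δ^{145} − Δ^{123}Δ^{456}. -/
open Matrix

lemma colDet_eq (a b c : Fin 3 → ℝ) :
    colDet a b c = a 0 * (b 1 * c 2 - b 2 * c 1) - b 0 * (a 1 * c 2 - a 2 * c 1)
      + c 0 * (a 1 * b 2 - a 2 * b 1) := by
  simp [colDet, Matrix.det_fin_three]; ring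

/-- The exchange relation in `G(3,6)` defining `Y`: with
`Y = Δ^{236} Δ^{145} − Δ^{123} Δ^{456}` and `Δ^{346} ≠ 0`,
`Δ^{346} · Y = Δ^{146} Δ^{236} Δ^{345} + Δ^{136} Δ^{234} Δ^{456}`. -/
theorem G36_exchange_relation (v : Fin 6 → (Fin 3 → ℝ))
    (h346 : colDet (v 2) (v 3) (v 5) ≠ 0) :
    colDet (v 2) (v 3) (v 5) *
        (colDet (v 1) (v 2) (v 5) * colDet (v 0) (v 3) (v 4) -
          colDet (v 0) (v 1) (v 2) * colDet (v 3) (v 4) (v 5)) =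
      colDet (v 0) (v 3) (v 5) * colDet (v 1) (v 2) (v 5) *
          colDet (v 2) (v 3) (v 4) +
        colDet (v 0) (v 2) (v 5) * colDet (v 1) (v 2) (v 3) *
          colDet (v 3) (v 4) (v 5) := by
  simp only [colDet_eq]; ring
end
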